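/- arXiv:2201.09794 — 7 statements merged into one kernel-verified Lean document; each statement's English description precedes it below -/
import Mathlib

section
/- Let H = (V, E) be a countable, linear, k-uniform hypergraph that has property 𝒫₂. Then for every injective edge labeling φ : E → ℕ there exists an infinite increasing path in H, i.e., an infinite path whose edge sequence e₀e₁… satisfies φ(eᵢ) < φ(eᵢ₊₁) for all i ≥ 0. -/
open Set Function

/-- A hypergraph on vertex type `V` is given by its edge family `E : Set (Set V)`.
`Uniform E k` says every edge has exactly `k` vertices. -/
def Uniform {V : Type*} (E : Set (Set V)) (k : ℕ) : Prop :=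
  ∀ e ∈ E, e.Finite ∧ e.ncard = k

/-- A hypergraph is linear if any two distinct edges intersect in at most one vertex. -/
def LinearHG {V : Type*} (E : Set (Set V)) : Prop :=
  ∀ e ∈ E, ∀ f ∈ E, e ≠ f → (e ∩ f).Subsingleton

/-- Property 𝒫ℓ: there is a nonempty `V'` such that every `v ∈ V'` belongs to infinitely
many edges `e` with `|V' ∩ e| ≥ ℓ`. -/
def PropP {V : Type*} (E : Set (Set V)) (l : ℕ) : Prop :=
  ∃ V' : Set V, V'.Nonempty ∧
    ∀ v ∈ V', {e | e ∈ E ∧ v ∈ e ∧ l ≤ (V' ∩ e).ncard}.Infinite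

/-- Property 𝒫₂: there is a nonempty `V'` such that every `v ∈ V'` belongs to infinitely
many edges `e` with `|V' ∩ e| ≥ 2`. -/
def PropP2 {V : Type*} (E : Set (Set V)) : Prop :=
  ∃ V' : Set V, V'.Nonempty ∧
    ∀ v ∈ V', {e | e ∈ E ∧ v ∈ e ∧ (V' ∩ e).Nontrivial}.Infinite

/-- Property 𝒫₂*: there is a nonempty `E' ⊆ E` such that for every `e ∈ E'` the set of
vertices of `e` also covered by some other edge of `E'` is infinite. -/
def PropP2Star {V : Type*} (E : Set (Set V)) : Prop :=
  ∃ E' : Set (Set V), E' ⊆ E ∧ E'.Nonempty ∧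
    ∀ e ∈ E', {x | x ∈ e ∧ ∃ f ∈ E', f ≠ e ∧ x ∈ f}.Infinite

/-- The edge family of the dual hypergraph: its vertices are the edges of `E`, and its
edges are the sets `v* = {e ∈ E : v ∈ e}` for `v : V`. -/
def dualEdges {V : Type*} (E : Set (Set V)) : Set (Set ↥E) :=
  {S | ∃ v : V, S = {e : ↥E | v ∈ (e : Set V)}}

/-- The edge family of a simple graph, viewed as a 2-uniform hypergraph. -/
def graphEdgeFamily {V : Type*} (G : SimpleGraph V) : Set (Set V) :=
  {s | ∃ a b, G.Adj a b ∧ s = ({a, b} : Set V)}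

/-- The `i`-th edge `{v_{(k-1)i+1}, …, v_{(k-1)i+k}}` of the vertex sequence `v`
(0-indexed: `v n` is the vertex `v_{n+1}`). -/
def pathEdge {V : Type*} (k : ℕ) (v : ℕ → V) (i : ℕ) : Set V :=
  (fun j => v ((k - 1) * i + j)) '' (Set.Iio k)

/-- An infinite path in a `k`-uniform hypergraph: a sequence of distinct vertices all of
whose consecutive `k`-blocks (overlapping in one vertex) are edges. -/
def IsInfPath {V : Type*} (E : Set (Set V)) (k : ℕ) (v : ℕ → V) : Prop :=
  Function.Injective v ∧ ∀ i, pathEdge k v i ∈ E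

/-- An infinite β-path `v₁e₁v₂e₂…` (0-indexed: `v i`, `e i` are `v_{i+1}`, `e_{i+1}`):
distinct vertices, distinct edges, and `vᵢ` belongs to `eᵢ₋₁` and `eᵢ` (with `e₀ = e₁`)
and to no other edge of the sequence. -/
structure IsInfBetaPath {V : Type*} (E : Set (Set V)) (v : ℕ → V) (e : ℕ → Set V) :
    Prop where
  vinj : Function.Injective v
  einj : Function.Injective e
  edges_mem : ∀ i, e i ∈ E
  mem_iff : ∀ i j, v i ∈ e j ↔ (j = i ∨ j + 1 = i)

/-- A finite β-path `v₁e₁v₂e₂…vₙeₙ` (0-indexed): distinct vertices, distinct edges, and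
`vᵢ` belongs to `eᵢ₋₁` and `eᵢ` (with `e₀ = e₁`) and to no other edge of the sequence. -/
def IsBetaPath {V : Type*} (E : Set (Set V)) {n : ℕ} (v : Fin n → V)
    (e : Fin n → Set V) : Prop :=
  Function.Injective v ∧ Function.Injective e ∧ (∀ i, e i ∈ E) ∧
    ∀ i j, v i ∈ e j ↔ ((j : ℕ) = (i : ℕ) ∨ (j : ℕ) + 1 = (i : ℕ))

/-- A β-cycle `e₁v₁e₂v₂…eₙvₙe₁` (0-indexed), `n ≥ 3`: distinct vertices, distinct edges,
and `vᵢ` belongs to `eᵢ` and `eᵢ₊₁` (cyclically) and to no other edge of the sequence. -/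
def IsBetaCycle {V : Type*} (E : Set (Set V)) {n : ℕ} (v : Fin n → V)
    (e : Fin n → Set V) : Prop :=
  3 ≤ n ∧ Function.Injective v ∧ Function.Injective e ∧ (∀ i, e i ∈ E) ∧
    ∀ i j, v i ∈ e j ↔ ((j : ℕ) = (i : ℕ) ∨ (j : ℕ) = ((i : ℕ) + 1) % n)

/-- The set of β-cycles of `E` involving the vertex `x`. -/
def BetaCyclesThroughVertex {V : Type*} (E : Set (Set V)) (x : V) :
    Set ((n : ℕ) × ((Fin n → V) × (Fin n → Set V))) :=
  {c | IsBetaCycle E c.2.1 c.2.2 ∧ ∃ i, c.2.1 i = x}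

/-- The set of β-cycles of `E` involving the edge `f`. -/
def BetaCyclesThroughEdge {V : Type*} (E : Set (Set V)) (f : Set V) :
    Set ((n : ℕ) × ((Fin n → V) × (Fin n → Set V))) :=
  {c | IsBetaCycle E c.2.1 c.2.2 ∧ ∃ i, c.2.2 i = f}

/-- `G` has a (nonempty) subgraph in which every vertex has infinite degree. -/
def HasInfDegSubgraph {V : Type*} (G : SimpleGraph V) : Prop :=
  ∃ G' : G.Subgraph, G'.verts.Nonempty ∧ ∀ v ∈ G'.verts, (G'.neighborSet v).Infinite

/-- `G` is a skeleton of the hypergraph with edge family `F`: it is generated by a set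
`T ⊆ {(v, e) : v ∈ e ∈ F}` with all fibers `T_f` finite, its edges being the pairs
`{v, w}` with `(v, e) ∈ T` and `w ∈ e`, `w ≠ v`. -/
def IsSkeleton {W : Type*} (F : Set (Set W)) (G : SimpleGraph W) : Prop :=
  ∃ T : Set (W × Set W),
    (∀ p ∈ T, p.1 ∈ p.2 ∧ p.2 ∈ F) ∧
    (∀ f ∈ F, {p ∈ T | p.2 = f}.Finite) ∧
    (∀ a b, G.Adj a b ↔
      a ≠ b ∧ ((∃ e, (a, e) ∈ T ∧ b ∈ e) ∨ (∃ e, (b, e) ∈ T ∧ a ∈ e)))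

/-!
Let `V'` witness property 𝒫₂. Starting at a vertex of `V'`, build the path one edge at a time:
from the current end `x ∈ V'`, infinitely many edges through `x` contain a second vertex of
`V'`. Only finitely many of them carry a label below any given bound, and, by linearity, only
finitely many meet the finite set of vertices used so far in a vertex other than `x`. Any
remaining edge is traversed from `x` to a vertex of `V'`, which becomes the new end.
-/

section

variable {V : Type*}

lemma exists_seq_of_forall_exists {α : Type*} {P : α → Prop} {r : α → α → Prop}
    (h₀ : ∃ a, P a) (h : ∀ a, P a → ∃ b, P b ∧ r a b) :
    ∃ f : ℕ → α, (∀ n, P (f n)) ∧ ∀ n, r (f n) (f (n + 1)) := by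
  obtain ⟨a, ha⟩ := h₀
  choose! g hgP hgr using h
  have hP : ∀ n, P (g^[n] a) := fun n => by
    induction n with
    | zero => exact ha
    | succ n ih => rw [iterate_succ_apply']; exact hgP _ ih
  refine ⟨fun n => g^[n] a, hP, fun n => ?_⟩
  simp only [iterate_succ_apply']
  exact hgr _ (hP n)

lemma Set.exists_injOn_Iic_image_eq_of_ncard_eq_succ {s : Set V} {m : ℕ}
    (hs : s.ncard = m + 1) {x w : V} (hx : x ∈ s) (hw : w ∈ s) (hxw : x ≠ w) :
    ∃ g : ℕ → V, InjOn g (Iic m) ∧ g '' Iic m = s ∧ g 0 = x ∧ g m = w := by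
  have : Finite s := (finite_of_ncard_ne_zero (by omega)).to_subtype
  have h0last : (0 : Fin (m + 1)) ≠ Fin.last m := by
    have := (one_lt_ncard_iff).mpr ⟨x, w, hx, hw, hxw⟩
    simpa [Fin.ext_iff] using (show 0 ≠ m by omega)
  let σ : Fin (m + 1) ≃ s := ((Finite.equivFin s).trans (finCongr hs)).symm
  obtain ⟨τ, hτ0, hτlast⟩ := MulAction.is_two_pretransitive_iff.mp
    (Equiv.Perm.isMultiplyPretransitive s 2) (σ.injective.ne h0last)
    (show (⟨x, hx⟩ : s) ≠ ⟨w, hw⟩ from fun h => hxw (congrArg Subtype.val h))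
  let f : Fin (m + 1) ≃ s := σ.trans τ
  refine ⟨fun j => f (Fin.ofNat (m + 1) j), fun a ha b hb hab => ?_, ?_,
    congrArg Subtype.val hτ0, ?_⟩
  · have := congrArg Fin.val (f.injective (Subtype.ext hab))
    simpa [Nat.mod_eq_of_lt (Nat.lt_succ_of_le ha), Nat.mod_eq_of_lt (Nat.lt_succ_of_le hb)]
      using this
  · refine Subset.antisymm (image_subset_iff.mpr fun j _ => (f _).2) fun y hy => ?_
    exact ⟨f.symm ⟨y, hy⟩, Nat.le_of_lt_succ (f.symm _).isLt, by simp⟩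
  · simp only [Fin.ofNat, Nat.mod_eq_of_lt (Nat.lt_succ_self m)]
    exact congrArg Subtype.val hτlast

lemma LinearHG.setOf_mem_mem_subsingleton {E : Set (Set V)} (hlin : LinearHG E) {x u : V}
    (hxu : x ≠ u) : {e | e ∈ E ∧ x ∈ e ∧ u ∈ e}.Subsingleton :=
  fun e he f hf => by_contra fun hne =>
    hxu (hlin e he.1 f hf.1 hne ⟨he.2.1, hf.2.1⟩ ⟨he.2.2, hf.2.2⟩)

lemma LinearHG.finite_setOf_mem_not_inter_subset {E : Set (Set V)} (hlin : LinearHG E)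
    (x : V) {U : Set V} (hU : U.Finite) :
    {e | e ∈ E ∧ x ∈ e ∧ ¬e ∩ U ⊆ {x}}.Finite := by
  refine ((hU.sdiff (t := {x})).biUnion fun u hu =>
    (hlin.setOf_mem_mem_subsingleton (Ne.symm hu.2)).finite).subset ?_
  rintro e ⟨he, hxe, hnot⟩
  obtain ⟨u, ⟨hue, huU⟩, hux⟩ := not_subset.mp hnot
  exact mem_biUnion ⟨huU, hux⟩ ⟨he, hxe, hue⟩

lemma finite_setOf_label_lt {E : Set (Set V)} {φ : ↥E → ℕ} (hφ : Injective φ) (N : ℕ) :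
    {e | ∃ he : e ∈ E, φ ⟨e, he⟩ < N}.Finite :=
  (((finite_Iio N).preimage hφ.injOn).image Subtype.val).subset
    fun e ⟨he, hlt⟩ => ⟨⟨e, he⟩, hlt, rfl⟩

lemma exists_fresh_edge {E : Set (Set V)} (hlin : LinearHG E) {V' : Set V} {x : V}
    (hx : {e | e ∈ E ∧ x ∈ e ∧ (V' ∩ e).Nontrivial}.Infinite) {φ : ↥E → ℕ}
    (hφ : Injective φ) {U : Set V} (hU : U.Finite) (N : ℕ) :
    ∃ e, ∃ he : e ∈ E, x ∈ e ∧ (∃ w ∈ V', w ∈ e ∧ w ≠ x) ∧ e ∩ U ⊆ {x} ∧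
      N ≤ φ ⟨e, he⟩ := by
  obtain ⟨e, ⟨he, hxe, hrich⟩, hbad⟩ :=
    (hx.sdiff ((finite_setOf_label_lt hφ N).union
      (hlin.finite_setOf_mem_not_inter_subset x hU))).nonempty
  simp only [mem_union, mem_ofPred_eq, not_or, not_exists, not_lt, not_and, not_not] at hbad
  obtain ⟨w, ⟨hwV', hwe⟩, hwx⟩ := hrich.exists_ne x
  exact ⟨e, he, hxe, ⟨w, hwV', hwe, hwx⟩, hbad.2 he hxe, hbad.1 he⟩

lemma exists_fresh_block {m : ℕ} {E : Set (Set V)} (hunif : Uniform E (m + 1))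
    (hlin : LinearHG E) {V' : Set V} {x : V}
    (hx : {e | e ∈ E ∧ x ∈ e ∧ (V' ∩ e).Nontrivial}.Infinite) {φ : ↥E → ℕ}
    (hφ : Injective φ) {U : Set V} (hU : U.Finite) (N : ℕ) :
    ∃ B : ℕ → V, InjOn B (Iic m) ∧ ∃ he : B '' Iic m ∈ E, B 0 = x ∧ B m ∈ V' ∧
      B '' Iic m ∩ U ⊆ {x} ∧ N ≤ φ ⟨_, he⟩ := by
  obtain ⟨e, he, hxe, ⟨w, hwV', hwe, hwx⟩, hfresh, hN⟩ := exists_fresh_edge hlin hx hφ hU N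
  obtain ⟨B, hinj, rfl, hB0, hBm⟩ :=
    exists_injOn_Iic_image_eq_of_ncard_eq_succ (hunif _ he).2 hxe hwe hwx.symm
  exact ⟨B, hinj, he, hB0, hBm ▸ hwV', hfresh, hN⟩

structure IsBlockChain (m : ℕ) (B : ℕ → ℕ → V) : Prop where
  injOn : ∀ i, InjOn (B i) (Iic m)
  glue : ∀ i, B (i + 1) 0 = B i m
  fresh : ∀ i, ∀ j ≤ i, B (i + 1) '' Iic m ∩ B j '' Iic m ⊆ {B i m}

/-- Position `m * i + r` with `r < m` reads `B i r`; the end `B i m` of a block is read as the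
start `B (i + 1) 0` of the next one. -/
def concatBlocks (m : ℕ) (B : ℕ → ℕ → V) (n : ℕ) : V :=
  B (n / m) (n % m)

section concatBlocks

variable {m : ℕ} {B : ℕ → ℕ → V}

lemma concatBlocks_mul_add (hglue : ∀ i, B (i + 1) 0 = B i m) (hm : 0 < m) {j : ℕ}
    (hj : j ≤ m) (i : ℕ) : concatBlocks m B (m * i + j) = B i j := by
  rcases hj.lt_or_eq with hj | rfl
  · simp [concatBlocks, Nat.mul_add_div hm, Nat.div_eq_of_lt hj, Nat.mod_eq_of_lt hj]
  · rw [← hglue, ← mul_add_one]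
    simp [concatBlocks, hm.ne']

lemma pathEdge_concatBlocks (hglue : ∀ i, B (i + 1) 0 = B i m) (hm : 0 < m) (i : ℕ) :
    pathEdge (m + 1) (concatBlocks m B) i = B i '' Iic m := by
  rw [pathEdge, Nat.add_sub_cancel, Iio_add_one_eq_Iic]
  exact image_congr fun j hj => concatBlocks_mul_add hglue hm hj i

lemma IsBlockChain.eq_of_lt (hB : IsBlockChain m B) (hm : 0 < m) {i j r r' : ℕ}
    (hij : i < j) (hr : r ≤ m) (hr' : r' ≤ m) (h : B i r = B j r') : r = m := by
  obtain ⟨j, rfl⟩ := Nat.exists_eq_add_of_lt hij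
  have hprev : B i r = B (i + j) m :=
    hB.fresh (i + j) i (by omega) ⟨⟨r', hr', h.symm⟩, ⟨r, hr, rfl⟩⟩
  rcases j with _ | j
  · exact hB.injOn i hr self_mem_Iic hprev
  -- `B (i + j + 1) m` also lies in block `i`, so freshness makes it the start of its block
  have hmeet : B (i + j + 1) m = B (i + j + 1) 0 :=
    (hB.fresh (i + j) i (by omega) ⟨⟨m, self_mem_Iic, rfl⟩, ⟨r, hr, hprev⟩⟩).trans
      (hB.glue _).symm
  exact absurd (hB.injOn _ self_mem_Iic (Nat.zero_le m) hmeet) hm.ne'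

lemma IsBlockChain.concatBlocks_injective (hB : IsBlockChain m B) (hm : 0 < m) :
    Injective (concatBlocks m B) := by
  have key : ∀ n n', n / m ≤ n' / m → concatBlocks m B n = concatBlocks m B n' → n = n' := by
    intro n n' hle h
    have hr := Nat.mod_lt n hm
    have hr' := Nat.mod_lt n' hm
    rcases hle.lt_or_eq with hlt | heq
    · exact absurd (hB.eq_of_lt hm hlt hr.le hr'.le h) hr.ne
    · rw [concatBlocks, heq] at h
      rw [← Nat.div_add_mod n m, ← Nat.div_add_mod n' m, heq,
        hB.injOn _ (mem_Iic.mpr hr.le) (mem_Iic.mpr hr'.le) h]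
  intro n n' h
  rcases le_total (n / m) (n' / m) with hle | hle
  exacts [key n n' hle h, (key n' n hle h.symm).symm]

end concatBlocks

lemma exists_isBlockChain_label_strictMono {m : ℕ} {E : Set (Set V)}
    (hunif : Uniform E (m + 1)) (hlin : LinearHG E) {V' : Set V}
    (hV' : ∀ v ∈ V', {e | e ∈ E ∧ v ∈ e ∧ (V' ∩ e).Nontrivial}.Infinite) {x₀ : V}
    (hx₀ : x₀ ∈ V') {φ : ↥E → ℕ} (hφ : Injective φ) :
    ∃ B : ℕ → ℕ → V, IsBlockChain m B ∧ ∃ hE : ∀ i, B i '' Iic m ∈ E,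
      ∀ i, φ ⟨_, hE i⟩ < φ ⟨_, hE (i + 1)⟩ := by
  -- states: the current block together with a finite set containing all blocks so far
  let Good : (ℕ → V) × Set V → Prop := fun p =>
    InjOn p.1 (Iic m) ∧ p.1 '' Iic m ∈ E ∧ p.1 m ∈ V' ∧ p.2.Finite ∧ p.1 '' Iic m ⊆ p.2
  let Step : (ℕ → V) × Set V → (ℕ → V) × Set V → Prop := fun p q =>
    q.1 0 = p.1 m ∧ q.1 '' Iic m ∩ p.2 ⊆ {p.1 m} ∧ q.2 = p.2 ∪ q.1 '' Iic m ∧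
      ∃ hp : p.1 '' Iic m ∈ E, ∃ hq : q.1 '' Iic m ∈ E, φ ⟨_, hp⟩ < φ ⟨_, hq⟩
  have init : ∃ p, Good p := by
    obtain ⟨B, hinj, hE, -, hBm, -⟩ := exists_fresh_block hunif hlin (hV' x₀ hx₀) hφ finite_empty 0
    exact ⟨(B, B '' Iic m), hinj, hE, hBm, (finite_Iic m).image B, subset_rfl⟩
  have step : ∀ p, Good p → ∃ q, Good q ∧ Step p q := by
    rintro ⟨B, U⟩ ⟨-, hE, hBm, hU, -⟩
    obtain ⟨B', hinj', hE', hB'0, hB'm, hfresh, hφ'⟩ :=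
      exists_fresh_block hunif hlin (hV' _ hBm) hφ hU (φ ⟨_, hE⟩ + 1)
    exact ⟨(B', U ∪ B' '' Iic m), ⟨hinj', hE', hB'm, hU.union ((finite_Iic m).image B'),
      subset_union_right⟩, hB'0, hfresh, rfl, hE, hE', hφ'⟩
  obtain ⟨p, hgood, hstep⟩ := exists_seq_of_forall_exists init step
  have hmono : Monotone fun i => (p i).2 :=
    monotone_nat_of_le_succ fun i => (hstep i).2.2.1 ▸ subset_union_left
  refine ⟨fun i => (p i).1, ⟨fun i => (hgood i).1, fun i => (hstep i).1, fun i j hj => ?_⟩,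
    fun i => (hgood i).2.1, fun i => ?_⟩
  · exact (inter_subset_inter_right _ ((hgood j).2.2.2.2.trans (hmono hj))).trans (hstep i).2.1
  · obtain ⟨_, _, h⟩ := (hstep i).2.2.2
    exact h

end

theorem stmt_4_general {V : Type*} (k : ℕ) (hk : 2 ≤ k) (E : Set (Set V))
    (hunif : Uniform E k) (hlin : LinearHG E) (hP2 : PropP2 E) :
    ∀ φ : ↥E → ℕ, Function.Injective φ →
      ∃ v : ℕ → V, Function.Injective v ∧
        ∃ he : ∀ i, pathEdge k v i ∈ E,
          ∀ i, φ ⟨pathEdge k v i, he i⟩ < φ ⟨pathEdge k v (i + 1), he (i + 1)⟩ := by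
  intro φ hφ
  obtain ⟨m, rfl⟩ : ∃ m, k = m + 1 := ⟨k - 1, by omega⟩
  have hm : 0 < m := by omega
  obtain ⟨V', ⟨x₀, hx₀⟩, hV'⟩ := hP2
  obtain ⟨B, hB, hE, hφB⟩ := exists_isBlockChain_label_strictMono hunif hlin hV' hx₀ hφ
  have hpath := pathEdge_concatBlocks hB.glue hm
  refine ⟨concatBlocks m B, hB.concatBlocks_injective hm, fun i => hpath i ▸ hE i, fun i => ?_⟩
  convert hφB i using 3 <;> exact hpath _

/-- If a countable linear `k`-uniform hypergraph has property 𝒫₂, then every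
injective edge labeling admits an infinite increasing path. -/
theorem stmt_4 {V : Type*} [Countable V] (k : ℕ) (hk : 2 ≤ k) (E : Set (Set V))
    (hunif : Uniform E k) (hlin : LinearHG E) (hP2 : PropP2 E) :
    ∀ φ : ↥E → ℕ, Function.Injective φ →
      ∃ v : ℕ → V, Function.Injective v ∧
        ∃ he : ∀ i, pathEdge k v i ∈ E,
          ∀ i, φ ⟨pathEdge k v i, he i⟩ < φ ⟨pathEdge k v (i + 1), he (i + 1)⟩ :=
  stmt_4_general k hk E hunif hlin hP2
end

section
/- If v₁e₁v₂e₂v₃… is an infinite β-path in a hypergraph H, then e₁v₂*e₂v₃*e₃… is an infinite β-path in the dual hypergraph H*, where v* = {e ∈ E(H) : v ∈ e}. -/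
open Set Function

/-- If `v₁e₁v₂e₂v₃…` is an infinite β-path in `H`, then `e₁v₂*e₂v₃*e₃…` is an
infinite β-path in the dual `H*`. -/
theorem stmt_6 {V : Type*} (E : Set (Set V)) (v : ℕ → V) (e : ℕ → Set V)
    (h : IsInfBetaPath E v e) :
    IsInfBetaPath (dualEdges E) (fun i => (⟨e i, h.edges_mem i⟩ : ↥E))
      (fun i => {f : ↥E | v (i + 1) ∈ (f : Set V)}) := by
  constructor
  · intro i j hij
    exact h.einj (by simpa using congrArg Subtype.val hij)
  · intro i j hij
    replace hij : {f : ↥E | v (i + 1) ∈ (f : Set V)} = {f : ↥E | v (j + 1) ∈ (f : Set V)} := hij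
    have hi : (⟨e (i + 1), h.edges_mem (i + 1)⟩ : ↥E) ∈
        {f : ↥E | v (i + 1) ∈ (f : Set V)} := by
      simp [(h.mem_iff (i + 1) (i + 1)).2 (Or.inl rfl)]
    rw [hij] at hi
    have h1 := (h.mem_iff (j + 1) (i + 1)).1 hi
    have hj : (⟨e (j + 1), h.edges_mem (j + 1)⟩ : ↥E) ∈
        {f : ↥E | v (j + 1) ∈ (f : Set V)} := by
      simp [(h.mem_iff (j + 1) (j + 1)).2 (Or.inl rfl)]
    rw [← hij] at hj
    have h2 := (h.mem_iff (i + 1) (j + 1)).1 hj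
    omega
  · intro i
    exact ⟨v (i + 1), rfl⟩
  · intro i j
    have := h.mem_iff (j + 1) i
    simp only [Set.mem_setOf_eq]
    constructor
    · intro hm
      have := this.1 hm
      omega
    · intro hm
      exact this.2 (by omega)
end

section
/- Let G be a countable (simple) graph with dual hypergraph G*. Then G has a subgraph G' in which every vertex has infinite degree in G' if and only if for every injective vertex labeling φ : V(G*) → ℕ there exists an infinite increasing β-path in G*. -/
open Set Function

/-!
A β-path of the dual `G*` is a ray `w₀ w₁ …` of `G`, read as the edges `{wᵢ, wᵢ₊₁}` preceded
by one more edge at `w₀`. If every vertex of `G'` has infinite degree, a greedy walk in `G'` can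
always continue to a new vertex along an edge of larger label.

Conversely, transfinite peeling of vertices of finite degree well-orders `V` so that every vertex
has only finitely many larger neighbours. Cover `V` by finite layers and label the edges stage by
stage, the stage of an edge being the layer of its lower end; within a stage the settled edges
(whose higher end already lies in that layer) come last, by decreasing higher end. Along a ray
with increasing labels the edges are eventually settled, and from then on their higher ends never
increase, although they must change every two steps: this contradicts well-foundedness.
-/

section DualBetaPath

variable {V : Type*} {E : Set (Set V)}

theorem injective_of_incidence {v : ℕ → Set V} {w : ℕ → V}
    (h : ∀ i j, w j ∈ v i ↔ (j = i ∨ j + 1 = i)) : Injective w := by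
  intro a b hab
  have hb := (h a b).mp (hab ▸ (h a a).mpr (Or.inl rfl))
  have ha := (h b a).mp (hab ▸ (h b b).mpr (Or.inl rfl))
  omega

theorem IsInfBetaPath.of_incidence {v : ℕ → E} {w : ℕ → V}
    (h : ∀ i j, w j ∈ (v i : Set V) ↔ (j = i ∨ j + 1 = i)) :
    IsInfBetaPath (dualEdges E) v fun j => {f : E | w j ∈ (f : Set V)} where
  vinj a b hab := by
    have hb := (h b a).mp (hab ▸ (h a a).mpr (Or.inl rfl))
    have ha := (h a b).mp (hab ▸ (h b b).mpr (Or.inl rfl))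
    omega
  einj a b hab := by
    have ha := (h _ b).mp ((Set.ext_iff.mp hab (v (a + 1))).mp ((h _ a).mpr (Or.inr rfl)))
    have hb := (h _ a).mp ((Set.ext_iff.mp hab (v (b + 1))).mpr ((h _ b).mpr (Or.inr rfl)))
    omega
  edges_mem j := ⟨w j, rfl⟩
  mem_iff i j := h i j

theorem IsInfBetaPath.exists_incidence {v : ℕ → E} {e : ℕ → Set E}
    (h : IsInfBetaPath (dualEdges E) v e) :
    ∃ w : ℕ → V, ∀ i j, w j ∈ (v i : Set V) ↔ (j = i ∨ j + 1 = i) := by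
  choose w hw using h.edges_mem
  refine ⟨w, fun i j => ?_⟩
  rw [← h.mem_iff, hw j]
  rfl

theorem IsInfBetaPath.of_ray {w : ℕ → V} (hw : Injective w) {z : V} (hz : ∀ j, w j ≠ z)
    {v : ℕ → E} (hv₀ : (v 0 : Set V) = {z, w 0})
    (hv : ∀ i, (v (i + 1) : Set V) = {w i, w (i + 1)}) :
    IsInfBetaPath (dualEdges E) v fun j => {f : E | w j ∈ (f : Set V)} := by
  refine IsInfBetaPath.of_incidence fun i j => ?_
  cases i with
  | zero =>
    rw [hv₀, Set.mem_insert_iff, Set.mem_singleton_iff, hw.eq_iff]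
    simp only [hz j, false_or]
    omega
  | succ k =>
    rw [hv k, Set.mem_insert_iff, Set.mem_singleton_iff, hw.eq_iff, hw.eq_iff]
    omega

end DualBetaPath

section GraphEdges

variable {V : Type*} {G : SimpleGraph V}

theorem pair_right_injective (x : V) : Injective fun y => ({x, y} : Set V) := fun y z h => by
  rcases Set.pair_eq_pair_iff.mp h with ⟨-, h⟩ | ⟨h₁, h₂⟩
  exacts [h, h₂.trans h₁]

theorem eq_pair_of_mem_graphEdgeFamily (f : graphEdgeFamily G) {x y : V}
    (hx : x ∈ (f : Set V)) (hy : y ∈ (f : Set V)) (hxy : x ≠ y) :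
    (f : Set V) = {x, y} := by
  obtain ⟨a, b, -, hf⟩ := f.2
  rw [hf] at hx hy ⊢
  rcases hx with rfl | rfl <;> rcases hy with rfl | rfl
  all_goals first | exact absurd rfl hxy | rfl | exact Set.pair_comm _ _

theorem IsInfBetaPath.exists_ray {v : ℕ → graphEdgeFamily G} {e : ℕ → Set (graphEdgeFamily G)}
    (h : IsInfBetaPath (dualEdges (graphEdgeFamily G)) v e) :
    ∃ w : ℕ → V, Injective w ∧ ∀ i, (v (i + 1) : Set V) = {w i, w (i + 1)} := by
  obtain ⟨w, hw⟩ := h.exists_incidence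
  have hinj := injective_of_incidence hw
  refine ⟨w, hinj, fun i => eq_pair_of_mem_graphEdgeFamily _ ?_ ?_ (hinj.ne (by omega))⟩
  · exact (hw _ _).mpr (Or.inr rfl)
  · exact (hw _ _).mpr (Or.inl rfl)

end GraphEdges

section InfiniteDegree

variable {V : Type*} {G : SimpleGraph V} {G' : G.Subgraph}

theorem exists_adj_edge_label_gt {φ : graphEdgeFamily G → ℕ} (hφ : Injective φ)
    {ι : V → ℕ} (hι : Injective ι) {x : V} (hx : (G'.neighborSet x).Infinite) (ℓ : ℕ) :
    ∃ y, ∃ f : graphEdgeFamily G, G'.Adj x y ∧ (f : Set V) = {x, y} ∧ ι x < ι y ∧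
      ℓ < φ f := by
  have hsmall : {y | ι y ≤ ι x}.Finite :=
    (Set.finite_Iic (ι x)).preimage hι.injOn
  have hcheap : {y | ∃ f : graphEdgeFamily G, (f : Set V) = {x, y} ∧ φ f ≤ ℓ}.Finite := by
    refine ((((Set.finite_Iic ℓ).preimage hφ.injOn).image Subtype.val).preimage
      (pair_right_injective x).injOn).subset ?_
    rintro y ⟨f, hf, hℓ⟩
    exact ⟨f, hℓ, hf⟩
  obtain ⟨y, hy, hyx⟩ := (hx.sdiff (hsmall.union hcheap)).nonempty
  have hadj : G'.Adj x y := hy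
  simp only [Set.mem_union, Set.mem_ofPred_eq, not_or, not_le, not_exists, not_and] at hyx
  refine ⟨y, ⟨{x, y}, x, y, G'.adj_sub hadj, rfl⟩, hadj, rfl, hyx.1, ?_⟩
  exact hyx.2 _ rfl

end InfiniteDegree

theorem HasInfDegSubgraph.exists_increasing_betaPath {V : Type*} [Countable V]
    {G : SimpleGraph V} (hG : HasInfDegSubgraph G) {φ : graphEdgeFamily G → ℕ}
    (hφ : Injective φ) :
    ∃ (v : ℕ → graphEdgeFamily G) (e : ℕ → Set (graphEdgeFamily G)),
      IsInfBetaPath (dualEdges (graphEdgeFamily G)) v e ∧ ∀ i, φ (v i) < φ (v (i + 1)) := by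
  obtain ⟨G', ⟨z, hz⟩, hdeg⟩ := hG
  obtain ⟨ι, hι⟩ := Countable.exists_injective_nat V
  have step (p : G'.verts × graphEdgeFamily G) : ∃ q : G'.verts × graphEdgeFamily G,
      (q.2 : Set V) = {(p.1 : V), (q.1 : V)} ∧ ι p.1 < ι q.1 ∧ φ p.2 < φ q.2 := by
    obtain ⟨y, g, hxy, hg, hιxy, hφfg⟩ := exists_adj_edge_label_gt hφ hι (hdeg _ p.1.2) (φ p.2)
    exact ⟨(⟨y, G'.edge_vert hxy.symm⟩, g), hg, hιxy, hφfg⟩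
  choose next hnext using step
  obtain ⟨y, f₀, hzy, hf₀, hιzy, -⟩ := exists_adj_edge_label_gt hφ hι (hdeg z hz) 0
  -- The walk starts with the edge `{z, y}` and only ever moves to vertices of larger `ι`,
  -- so it is a ray that never returns to `z`.
  set s : ℕ → G'.verts × graphEdgeFamily G :=
    fun n => next^[n] (⟨y, G'.edge_vert hzy.symm⟩, f₀)
  have hs (n : ℕ) : s (n + 1) = next (s n) := Function.iterate_succ_apply' _ _ _
  set w : ℕ → V := fun n => (s n).1
  have hιw : StrictMono (ι ∘ w) :=
    strictMono_nat_of_lt_succ fun n => by simpa only [comp_apply, w, hs] using (hnext (s n)).2.1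
  have hwinj : Injective w := hιw.injective.of_comp
  have hφs : StrictMono fun n => φ (s n).2 :=
    strictMono_nat_of_lt_succ fun n => by simpa only [hs] using (hnext (s n)).2.2
  refine ⟨fun n => (s n).2, _, IsInfBetaPath.of_ray hwinj (z := z) (fun j hj => ?_) hf₀
    (fun k => by simpa only [w, hs] using (hnext (s k)).1), fun i => hφs i.lt_succ_self⟩
  have := hιw.monotone (Nat.zero_le j)
  simp only [comp_apply, hj] at this
  exact this.not_gt hιzy

universe u

section Peeling

variable {V : Type u} (G : SimpleGraph V)

noncomputable def peeled : Ordinal.{u} → Set V :=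
  wellFounded_lt.fix fun α K => {v | {u | G.Adj v u ∧ ∀ β (h : β < α), u ∉ K β h}.Finite}

theorem peeled_eq (α : Ordinal.{u}) :
    peeled G α = {v | {u | G.Adj v u ∧ ∀ β < α, u ∉ peeled G β}.Finite} := by
  rw [peeled, WellFounded.fix_eq]

variable {G}

theorem exists_mem_peeled (h : ¬ HasInfDegSubgraph G) (v : V) : ∃ α, v ∈ peeled G α := by
  by_contra! hv
  set C := {v | ∀ α, v ∉ peeled G α}
  choose α hα using fun u : ↥Cᶜ => not_forall_not.mp u.2
  set α₀ := ⨆ u, Order.succ (α u)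
  unfold HasInfDegSubgraph at h
  refine h ⟨(⊤ : G.Subgraph).induce C, (⟨v, hv⟩ : C.Nonempty), fun x hx => ?_⟩
  -- `x` survives stage `α₀`, and every neighbour outside `C` was removed before `α₀`.
  have hx₀ : {u | G.Adj x u ∧ ∀ β < α₀, u ∉ peeled G β}.Infinite := by
    have := hx α₀
    rwa [peeled_eq] at this
  refine hx₀.mono fun u hu => ?_
  have huC : u ∈ C := by_contra fun huC =>
    hu.2 _ ((Order.lt_succ _).trans_le (Ordinal.le_iSup _ ⟨u, huC⟩)) (hα ⟨u, huC⟩)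
  exact (SimpleGraph.Subgraph.mem_neighborSet _ _ _).mpr ⟨hx, huC, hu.1⟩

theorem exists_rank_of_not_hasInfDegSubgraph (h : ¬ HasInfDegSubgraph G) :
    ∃ ρ : V → Ordinal.{u}, ∀ v, {u | G.Adj v u ∧ ρ v ≤ ρ u}.Finite := by
  refine ⟨fun v => sInf {α | v ∈ peeled G α}, fun v => ?_⟩
  have hv : v ∈ peeled G (sInf {α | v ∈ peeled G α}) := csInf_mem (exists_mem_peeled h v)
  rw [peeled_eq] at hv
  exact hv.subset fun u ⟨hadj, hle⟩ => ⟨hadj, fun β hβ hu =>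
    (csInf_le' (s := {α | u ∈ peeled G α}) hu).not_gt (hβ.trans_le hle)⟩

theorem exists_wellOrder_of_not_hasInfDegSubgraph [Countable V] (h : ¬ HasInfDegSubgraph G) :
    ∃ _ : LinearOrder V, WellFoundedLT V ∧ ∀ v, {u | G.Adj v u ∧ v < u}.Finite := by
  obtain ⟨ρ, hρ⟩ := exists_rank_of_not_hasInfDegSubgraph h
  obtain ⟨ι, hι⟩ := Countable.exists_injective_nat V
  let κ : V → Ordinal.{u} ×ₗ ℕ := fun v => toLex (ρ v, ι v)
  have hκ : Injective κ := fun a b hab => hι (congrArg (fun p => (ofLex p).2) hab)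
  let _ : LinearOrder V := LinearOrder.lift' κ hκ
  refine ⟨‹_›, ⟨InvImage.wf κ wellFounded_lt⟩, fun v => (hρ v).subset ?_⟩
  exact fun u ⟨hadj, hlt⟩ => ⟨hadj, (Prod.Lex.toLex_lt_toLex'.mp hlt).1⟩

end Peeling

section Ends

variable {V : Type*} [LinearOrder V] {G : SimpleGraph V}

theorem exists_lt_eq_pair (f : graphEdgeFamily G) :
    ∃ p : V × V, p.1 < p.2 ∧ (f : Set V) = {p.1, p.2} := by
  obtain ⟨a, b, hab, hf⟩ := f.2
  rcases hab.ne.lt_or_gt with h | h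
  exacts [⟨(a, b), h, hf⟩, ⟨(b, a), h, hf.trans (Set.pair_comm a b)⟩]

noncomputable def lowEnd (f : graphEdgeFamily G) : V := (exists_lt_eq_pair f).choose.1

noncomputable def highEnd (f : graphEdgeFamily G) : V := (exists_lt_eq_pair f).choose.2

theorem lowEnd_lt_highEnd (f : graphEdgeFamily G) : lowEnd f < highEnd f :=
  (exists_lt_eq_pair f).choose_spec.1

theorem coe_eq_lowEnd_highEnd (f : graphEdgeFamily G) :
    (f : Set V) = {lowEnd f, highEnd f} :=
  (exists_lt_eq_pair f).choose_spec.2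

theorem mem_iff_eq_lowEnd_or_eq_highEnd {f : graphEdgeFamily G} {x : V} :
    x ∈ (f : Set V) ↔ x = lowEnd f ∨ x = highEnd f := by
  rw [coe_eq_lowEnd_highEnd]
  rfl

theorem highEnd_mem (f : graphEdgeFamily G) : highEnd f ∈ (f : Set V) :=
  mem_iff_eq_lowEnd_or_eq_highEnd.mpr (Or.inr rfl)

theorem le_highEnd {f : graphEdgeFamily G} {x : V} (hx : x ∈ (f : Set V)) : x ≤ highEnd f := by
  rcases mem_iff_eq_lowEnd_or_eq_highEnd.mp hx with rfl | rfl
  exacts [(lowEnd_lt_highEnd f).le, le_rfl]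

theorem adj_lowEnd_highEnd (f : graphEdgeFamily G) : G.Adj (lowEnd f) (highEnd f) := by
  obtain ⟨a, b, hab, hf⟩ := f.2
  rw [coe_eq_lowEnd_highEnd] at hf
  rcases Set.pair_eq_pair_iff.mp hf with ⟨h₁, h₂⟩ | ⟨h₁, h₂⟩
  exacts [h₁ ▸ h₂ ▸ hab, h₁ ▸ h₂ ▸ hab.symm]

theorem eq_of_lowEnd_eq_of_highEnd_eq {f g : graphEdgeFamily G} (hlow : lowEnd f = lowEnd g)
    (hhigh : highEnd f = highEnd g) : f = g :=
  Subtype.ext <| by rw [coe_eq_lowEnd_highEnd, coe_eq_lowEnd_highEnd, hlow, hhigh]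

end Ends

section Layers

variable {V : Type*} [LinearOrder V] (G : SimpleGraph V) (ι : V → ℕ)

def grow (S : Set V) : Set V := S ∪ ⋃ v ∈ S, {u | G.Adj v u ∧ v < u}

/-- The second `grow` is what makes an edge meeting an earlier layer `Settled`
(`settled_of_stage_lt`). -/
def layer : ℕ → Set V
  | 0 => ∅
  | n + 1 => grow G (grow G (layer n) ∪ ι ⁻¹' {n})

variable {G ι}

theorem subset_grow (S : Set V) : S ⊆ grow G S := Set.subset_union_left

theorem mem_grow_of_lowEnd_mem {S : Set V} {f : graphEdgeFamily G} (hf : lowEnd f ∈ S) {x : V}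
    (hx : x ∈ (f : Set V)) : x ∈ grow G S := by
  rcases mem_iff_eq_lowEnd_or_eq_highEnd.mp hx with rfl | rfl
  · exact subset_grow S hf
  · exact Or.inr (Set.mem_biUnion hf ⟨adj_lowEnd_highEnd f, lowEnd_lt_highEnd f⟩)

theorem grow_finite (hfin : ∀ v, {u | G.Adj v u ∧ v < u}.Finite) {S : Set V} (hS : S.Finite) :
    (grow G S).Finite :=
  hS.union (hS.biUnion fun v _ => hfin v)

theorem layer_mono : Monotone (layer G ι) :=
  monotone_nat_of_le_succ fun _ =>
    (subset_grow _).trans <| Set.subset_union_left.trans (subset_grow _)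

theorem mem_layer_succ (v : V) : v ∈ layer G ι (ι v + 1) :=
  subset_grow _ (Or.inr rfl)

theorem layer_finite (hfin : ∀ v, {u | G.Adj v u ∧ v < u}.Finite) (hι : Injective ι) (n : ℕ) :
    (layer G ι n).Finite := by
  induction n with
  | zero => exact Set.finite_empty
  | succ n ih =>
    exact grow_finite hfin <|
      (grow_finite hfin ih).union ((Set.finite_singleton n).preimage hι.injOn)

theorem finite_lowEnd_mem (hfin : ∀ v, {u | G.Adj v u ∧ v < u}.Finite) {S : Set V}
    (hS : S.Finite) : {f : graphEdgeFamily G | lowEnd f ∈ S}.Finite := by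
  refine Set.Finite.of_finite_image (f := fun f => (lowEnd f, highEnd f))
    ((hS.prod (grow_finite hfin hS)).subset ?_) fun f _ g _ h => ?_
  · rintro _ ⟨f, hf, rfl⟩
    exact ⟨hf, mem_grow_of_lowEnd_mem hf (highEnd_mem f)⟩
  · exact eq_of_lowEnd_eq_of_highEnd_eq (congrArg Prod.fst h) (congrArg Prod.snd h)

variable (ι)

open scoped Classical in
noncomputable def stage (f : graphEdgeFamily G) : ℕ :=
  Nat.find (p := fun n => lowEnd f ∈ layer G ι (n + 1)) ⟨_, mem_layer_succ (lowEnd f)⟩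

def Settled (f : graphEdgeFamily G) : Prop := highEnd f ∈ layer G ι (stage ι f + 1)

open scoped Classical in
noncomputable def edgeKey (f : graphEdgeFamily G) : ℕ ×ₗ Bool ×ₗ Vᵒᵈ ×ₗ V :=
  toLex (stage ι f, toLex (decide (Settled ι f), toLex (OrderDual.toDual (highEnd f), lowEnd f)))

variable {ι}

theorem lowEnd_mem_layer_stage (f : graphEdgeFamily G) : lowEnd f ∈ layer G ι (stage ι f + 1) :=
  by classical exact Nat.find_spec (p := fun n => lowEnd f ∈ layer G ι (n + 1)) _

theorem stage_le {f : graphEdgeFamily G} {n : ℕ} (h : lowEnd f ∈ layer G ι (n + 1)) :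
    stage ι f ≤ n := by
  classical exact Nat.find_min' _ h

theorem settled_of_stage_lt {f g : graphEdgeFamily G} {x : V} (hxf : x ∈ (f : Set V))
    (hxg : x ∈ (g : Set V)) (h : stage ι f < stage ι g) : Settled ι g := by
  have hx : x ∈ grow G (layer G ι (stage ι g)) :=
    mem_grow_of_lowEnd_mem (layer_mono h (lowEnd_mem_layer_stage f)) hxf
  change highEnd g ∈ grow G (grow G (layer G ι (stage ι g)) ∪ ι ⁻¹' {stage ι g})
  rcases mem_iff_eq_lowEnd_or_eq_highEnd.mp hxg with rfl | rfl
  · exact mem_grow_of_lowEnd_mem (f := g) (Or.inl hx) (highEnd_mem g)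
  · exact subset_grow _ (Or.inl hx)

end Layers

section Key

variable {V : Type*} [LinearOrder V] {G : SimpleGraph V} {ι : V → ℕ}
  {f g : graphEdgeFamily G} {x : V}

theorem settled_of_edgeKey_lt (hxf : x ∈ (f : Set V)) (hxg : x ∈ (g : Set V))
    (hf : Settled ι f) (h : edgeKey ι f < edgeKey ι g) : Settled ι g := by
  obtain ⟨hle, hlex⟩ := Prod.Lex.toLex_lt_toLex'.mp h
  rcases hle.lt_or_eq with hlt | hst
  · exact settled_of_stage_lt hxf hxg hlt
  · simpa [hf, Bool.le_iff_imp] using (Prod.Lex.toLex_lt_toLex'.mp (hlex hst)).1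

theorem highEnd_le_of_edgeKey_lt (hxf : x ∈ (f : Set V)) (hxg : x ∈ (g : Set V))
    (hf : Settled ι f) (h : edgeKey ι f < edgeKey ι g) : highEnd g ≤ highEnd f := by
  rcases mem_iff_eq_lowEnd_or_eq_highEnd.mp hxg with rfl | rfl
  · have hx : lowEnd g ∈ layer G ι (stage ι f + 1) := by
      rcases mem_iff_eq_lowEnd_or_eq_highEnd.mp hxf with hx | hx
      exacts [hx ▸ lowEnd_mem_layer_stage f, hx ▸ hf]
    obtain ⟨hle, hlex⟩ := Prod.Lex.toLex_lt_toLex'.mp h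
    have hg := settled_of_edgeKey_lt hxf hxg hf h
    obtain ⟨-, hlex'⟩ := Prod.Lex.toLex_lt_toLex'.mp (hlex (hle.antisymm (stage_le hx)))
    exact OrderDual.toDual_le_toDual.mp
      (Prod.Lex.toLex_lt_toLex'.mp (hlex' (by simp [hf, hg]))).1
  · exact le_highEnd hxf

theorem edgeKey_injective : Injective (edgeKey (G := G) ι) := fun f g h => by
  simp only [edgeKey, toLex_inj, Prod.mk.injEq, OrderDual.toDual_inj] at h
  exact eq_of_lowEnd_eq_of_highEnd_eq h.2.2.2 h.2.2.1

theorem finite_edgeKey_lt (hfin : ∀ v, {u | G.Adj v u ∧ v < u}.Finite) (hι : Injective ι)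
    (f : graphEdgeFamily G) : {g : graphEdgeFamily G | edgeKey ι g < edgeKey ι f}.Finite :=
  (finite_lowEnd_mem hfin (layer_finite hfin hι (stage ι f + 1))).subset fun g hg =>
    layer_mono (Nat.succ_le_succ (Prod.Lex.toLex_lt_toLex'.mp hg).1) (lowEnd_mem_layer_stage g)

theorem not_forall_edgeKey_lt [WellFoundedLT V] (hfin : ∀ v, {u | G.Adj v u ∧ v < u}.Finite)
    (hι : Injective ι) {w : ℕ → V} (hw : Injective w) {F : ℕ → graphEdgeFamily G}
    (hF : ∀ i, (F i : Set V) = {w i, w (i + 1)}) :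
    ¬ ∀ i, edgeKey ι (F i) < edgeKey ι (F (i + 1)) := by
  intro hkey
  have hshare (i : ℕ) : w (i + 1) ∈ (F i : Set V) ∧ w (i + 1) ∈ (F (i + 1) : Set V) := by
    simp [hF]
  obtain ⟨j, hj⟩ : ∃ j, stage ι (F j) < stage ι (F (j + 1)) := by
    by_contra! h
    have hFinj : Injective F :=
      (strictMono_nat_of_lt_succ hkey : StrictMono (edgeKey ι ∘ F)).injective.of_comp
    have hanti : Antitone fun i => stage ι (F i) := antitone_nat_of_succ_le h
    refine Set.infinite_range_of_injective hFinj <|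
      (finite_lowEnd_mem hfin (layer_finite hfin hι (stage ι (F 0) + 1))).subset ?_
    rintro _ ⟨i, rfl⟩
    exact layer_mono (Nat.succ_le_succ (hanti (Nat.zero_le i)))
      (lowEnd_mem_layer_stage (F i))
  have hsettled (i : ℕ) : Settled ι (F (j + 1 + i)) := by
    induction i with
    | zero => exact settled_of_stage_lt (hshare j).1 (hshare j).2 hj
    | succ i ih => exact settled_of_edgeKey_lt (hshare _).1 (hshare _).2 ih (hkey _)
  have hstep (i : ℕ) : highEnd (F (j + 1 + i + 1)) ≤ highEnd (F (j + 1 + i)) :=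
    highEnd_le_of_edgeKey_lt (hshare _).1 (hshare _).2 (hsettled i) (hkey _)
  refine not_strictAnti_of_wellFoundedLT (fun i => highEnd (F (j + 1 + 2 * i)))
    (strictAnti_nat_of_succ_lt fun i => ?_)
  set k := j + 1 + 2 * i
  have hle : highEnd (F (k + 2)) ≤ highEnd (F k) := (hstep (2 * i + 1)).trans (hstep (2 * i))
  refine hle.lt_of_ne fun heq => ?_
  have hk := highEnd_mem (F k)
  have hk₂ := highEnd_mem (F (k + 2))
  rw [hF] at hk hk₂
  rcases hk with hk | hk <;> rcases hk₂ with hk₂ | hk₂ <;>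
    · have := hw (hk₂.symm.trans (heq.trans hk))
      omega

end Key

theorem exists_nat_lt_iff_lt {X γ : Type*} [LinearOrder γ] (κ : X → γ)
    (hκ : ∀ x, {y | κ y < κ x}.Finite) : ∃ φ : X → ℕ, ∀ x y, φ x < φ y ↔ κ x < κ y := by
  refine ⟨fun x => {y | κ y < κ x}.ncard, fun x y => ⟨fun h => ?_, fun h => ?_⟩⟩
  · by_contra! hyx
    exact (Set.ncard_le_ncard (fun z hz => lt_of_lt_of_le hz hyx) (hκ x)).not_gt h
  · exact Set.ncard_lt_ncard
      ((Set.ssubset_iff_of_subset fun z hz => hz.trans h).mpr ⟨x, h, lt_irrefl _⟩) (hκ y)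

theorem exists_labeling_not_increasing_ray {V : Type*} [LinearOrder V] [WellFoundedLT V]
    [Countable V] {G : SimpleGraph V} (hfin : ∀ v, {u | G.Adj v u ∧ v < u}.Finite) :
    ∃ φ : graphEdgeFamily G → ℕ, Injective φ ∧
      ∀ {w : ℕ → V}, Injective w → ∀ {F : ℕ → graphEdgeFamily G},
        (∀ i, (F i : Set V) = {w i, w (i + 1)}) → ¬ ∀ i, φ (F i) < φ (F (i + 1)) := by
  obtain ⟨ι, hι⟩ := Countable.exists_injective_nat V
  obtain ⟨φ, hφ⟩ := exists_nat_lt_iff_lt (edgeKey ι) (finite_edgeKey_lt hfin hι)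
  refine ⟨φ, fun f g h => edgeKey_injective (ι := ι) ?_, fun hw F hF hinc =>
    not_forall_edgeKey_lt hfin hι hw hF fun i => (hφ _ _).mp (hinc i)⟩
  exact le_antisymm (not_lt.mp fun hlt => ((hφ g f).mpr hlt).ne h.symm)
    (not_lt.mp fun hlt => ((hφ f g).mpr hlt).ne h)

/-- A countable graph `G` has a subgraph all of whose vertices have infinite
degree iff every injective vertex labeling of the dual `G*` admits an infinite increasing
β-path. -/
theorem stmt_9 {V : Type*} [Countable V] (G : SimpleGraph V) :
    (∃ G' : G.Subgraph, G'.verts.Nonempty ∧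
        ∀ v ∈ G'.verts, (G'.neighborSet v).Infinite) ↔
      (∀ φ : ↥(graphEdgeFamily G) → ℕ, Function.Injective φ →
        ∃ (v : ℕ → ↥(graphEdgeFamily G)) (e : ℕ → Set ↥(graphEdgeFamily G)),
          IsInfBetaPath (dualEdges (graphEdgeFamily G)) v e ∧
            ∀ i, φ (v i) < φ (v (i + 1))) := by
  refine ⟨fun hG φ hφ => HasInfDegSubgraph.exists_increasing_betaPath hG hφ, fun h => ?_⟩
  by_contra hG
  obtain ⟨_, _, hfin⟩ := exists_wellOrder_of_not_hasInfDegSubgraph hG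
  obtain ⟨φ, hφ, hno⟩ := exists_labeling_not_increasing_ray hfin
  obtain ⟨v, e, hβ, hinc⟩ := h φ hφ
  obtain ⟨w, hw, hv⟩ := hβ.exists_ray
  exact hno hw hv fun i => hinc (i + 1)
end

section
/- Let H = (V, E) be a linear hypergraph with f ∈ E and u, v, w ∈ V, where v ≠ w. If there exist a β-path P₁ of the form u…vf (starting at vertex u and ending with vertex v followed by edge f) and a β-path P₂ of the form u…wf, then there exists a β-cycle in H of the form f v … w f, i.e., a β-cycle f₁v₁f₂v₂…fₘvₘf₁ with f₁ = f, v₁ = v, and vₘ = w. -/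
open Set Function

/-- A walk from `v` to `w` using edges of `E` distinct from `f`, whose interior
vertices avoid `f`. -/
private def FWalk {V : Type*} (E : Set (Set V)) (f : Set V) (v w : V)
    (k : ℕ) (c : ℕ → V) (d : ℕ → Set V) : Prop :=
  c 0 = v ∧ c k = w ∧
    (∀ i < k, d i ∈ E ∧ d i ≠ f ∧ c i ∈ d i ∧ c (i + 1) ∈ d i) ∧
    ∀ i, 0 < i → i < k → c i ∉ f

private lemma splice {V : Type*} {E : Set (Set V)} {f : Set V} {v w : V}
    {k : ℕ} {c : ℕ → V} {d : ℕ → Set V} (hw : FWalk E f v w k c d)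
    {s t j : ℕ} (hst : s + 2 ≤ t) (ht : t ≤ k) (hj : j < k)
    (h1 : c s ∈ d j) (h2 : c t ∈ d j) :
    ∃ k' < k, ∃ c' d', FWalk E f v w k' c' d' := by
  obtain ⟨h0, hk, he, hfint⟩ := hw
  set δ := t - s - 1 with hδ
  refine ⟨k - δ, by omega, fun r => if r ≤ s then c r else c (r + δ),
    fun r => if r < s then d r else if r = s then d j else d (r + δ), ?_, ?_, ?_, ?_⟩
  · dsimp only
    rw [if_pos (Nat.zero_le s)]
    exact h0
  · dsimp only
    rw [if_neg (show ¬ (k - δ ≤ s) by omega), show k - δ + δ = k by omega]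
    exact hk
  · intro i hi
    dsimp only
    rcases lt_trichotomy i s with h | h | h
    · rw [if_pos (le_of_lt h), if_pos (show i + 1 ≤ s from h), if_pos h]
      exact he i (by omega)
    · subst h
      rw [if_pos (le_refl i), if_neg (show ¬ (i + 1 ≤ i) by omega),
        if_neg (lt_irrefl i), if_pos rfl, show i + 1 + δ = t by omega]
      exact ⟨(he j hj).1, (he j hj).2.1, h1, h2⟩
    · rw [if_neg (show ¬ (i ≤ s) by omega), if_neg (show ¬ (i + 1 ≤ s) by omega),
        if_neg (show ¬ (i < s) by omega), if_neg (show ¬ (i = s) by omega),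
        show i + 1 + δ = i + δ + 1 by omega]
      exact he (i + δ) (by omega)
  · intro i hi1 hi2
    dsimp only
    by_cases h : i ≤ s
    · rw [if_pos h]
      exact hfint i hi1 (by omega)
    · rw [if_neg h]
      exact hfint (i + δ) (by omega) (by omega)

/-- Convert a finite β-path to ℕ-indexed data. -/
private lemma betaPath_nat {V : Type*} {E : Set (Set V)} {p : ℕ}
    {a : Fin (p + 1) → V} {g : Fin (p + 1) → Set V} (hbp : IsBetaPath E a g) :
    ∃ A : ℕ → V, ∃ G : ℕ → Set V,
      A 0 = a 0 ∧ A p = a (Fin.last p) ∧ G p = g (Fin.last p) ∧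
      (∀ j ≤ p, G j ∈ E) ∧
      (∀ i ≤ p, ∀ j ≤ p, G i = G j → i = j) ∧
      (∀ i ≤ p, ∀ j ≤ p, (A i ∈ G j ↔ j = i ∨ j + 1 = i)) := by
  obtain ⟨ainj, ginj, gmem, amem⟩ := hbp
  refine ⟨fun i => a ⟨min i p, by omega⟩, fun i => g ⟨min i p, by omega⟩,
    ?_, ?_, ?_, ?_, ?_, ?_⟩
  · exact congrArg a (Fin.ext (by simp))
  · exact congrArg a (Fin.ext (by simp [Fin.last]))
  · exact congrArg g (Fin.ext (by simp [Fin.last]))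
  · intro j _
    exact gmem _
  · intro i hi j hj hgg
    have := ginj hgg
    have h2 := congrArg Fin.val this
    simp only [Fin.val_mk] at h2
    omega
  · intro i hi j hj
    have := amem ⟨min i p, by omega⟩ ⟨min j p, by omega⟩
    simp only [Fin.val_mk] at this
    rw [this]
    rw [Nat.min_eq_left hi, Nat.min_eq_left hj]

/-- In a linear hypergraph, two β-paths `u…vf` and `u…wf` with `v ≠ w`
yield a β-cycle of the form `fv…wf`. -/
theorem stmt_10 {V : Type*} (E : Set (Set V)) (hlin : LinearHG E)
    (f : Set V) (hf : f ∈ E) (u v w : V) (hvw : v ≠ w)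
    (h1 : ∃ (n : ℕ) (vs : Fin (n + 1) → V) (es : Fin (n + 1) → Set V),
      IsBetaPath E vs es ∧ vs 0 = u ∧ vs (Fin.last n) = v ∧ es (Fin.last n) = f)
    (h2 : ∃ (n : ℕ) (vs : Fin (n + 1) → V) (es : Fin (n + 1) → Set V),
      IsBetaPath E vs es ∧ vs 0 = u ∧ vs (Fin.last n) = w ∧ es (Fin.last n) = f) :
    ∃ (m : ℕ) (vs : Fin (m + 3) → V) (es : Fin (m + 3) → Set V),
      IsBetaCycle E vs es ∧ es 0 = f ∧ vs 0 = v ∧ vs (Fin.last (m + 2)) = w := by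
  classical
  obtain ⟨p, a, g, hbp1, ha0, hap, hgp⟩ := h1
  obtain ⟨q, b, hh, hbp2, hb0, hbq, hhq⟩ := h2
  obtain ⟨A, G, hA0, hAp, hGp, hGE, hGinj, hAmem⟩ := betaPath_nat hbp1
  obtain ⟨B, H, hB0, hBq, hHq, hHE, hHinj, hBmem⟩ := betaPath_nat hbp2
  -- translate endpoint facts
  have hApv : A p = v := hAp.trans hap
  have hBqw : B q = w := hBq.trans hbq
  have hGpf : G p = f := hGp.trans hgp
  have hHqf : H q = f := hHq.trans hhq
  have hA0u : A 0 = u := hA0.trans ha0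
  have hB0u : B 0 = u := hB0.trans hb0
  have hvf : v ∈ f := by
    rw [← hApv, ← hGpf]
    exact (hAmem p le_rfl p le_rfl).mpr (Or.inl rfl)
  have hwf : w ∈ f := by
    rw [← hBqw, ← hHqf]
    exact (hBmem q le_rfl q le_rfl).mpr (Or.inl rfl)
  -- existence of a walk
  have hex : ∃ k, ∃ c : ℕ → V, ∃ d : ℕ → Set V, FWalk E f v w k c d := by
    refine ⟨p + q, fun i => if i ≤ p then A (p - i) else B (i - p),
      fun i => if i < p then G (p - 1 - i) else H (i - p), ?_, ?_, ?_, ?_⟩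
    · dsimp only
      rw [if_pos (Nat.zero_le p), Nat.sub_zero]
      exact hApv
    · dsimp only
      by_cases hq : q = 0
      · subst hq
        rw [if_pos (show p + 0 ≤ p by omega), show p - (p + 0) = 0 by omega]
        rw [hA0u]
        exact hB0u.symm.trans hBqw
      · rw [if_neg (show ¬ (p + q ≤ p) by omega), show p + q - p = q by omega]
        exact hBqw
    · intro i hi
      dsimp only
      by_cases hip : i < p
      · rw [if_pos hip, if_pos (le_of_lt hip), if_pos (show i + 1 ≤ p from hip)]
        refine ⟨hGE _ (by omega), ?_, ?_, ?_⟩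
        · intro hcon
          rw [← hGpf] at hcon
          have := hGinj (p - 1 - i) (by omega) p le_rfl hcon
          omega
        · rw [hAmem (p - i) (by omega) (p - 1 - i) (by omega)]
          omega
        · rw [hAmem (p - (i + 1)) (by omega) (p - 1 - i) (by omega)]
          omega
      · rw [if_neg hip]
        have hiq : i - p < q := by omega
        refine ⟨hHE _ (by omega), ?_, ?_, ?_⟩
        · intro hcon
          rw [← hHqf] at hcon
          have := hHinj (i - p) (by omega) q le_rfl hcon
          omega
        · by_cases hip2 : i ≤ p
          · rw [if_pos hip2, show p - i = 0 by omega, hA0u, ← hB0u,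
              show i - p = 0 by omega]
            rw [hBmem 0 (by omega) 0 (by omega)]
            omega
          · rw [if_neg hip2]
            rw [hBmem (i - p) (by omega) (i - p) (by omega)]
            omega
        · rw [if_neg (show ¬ (i + 1 ≤ p) by omega)]
          rw [hBmem (i + 1 - p) (by omega) (i - p) (by omega)]
          omega
    · intro i hi1 hi2
      dsimp only
      by_cases hip : i ≤ p
      · rw [if_pos hip, ← hGpf]
        rw [hAmem (p - i) (by omega) p le_rfl]
        omega
      · rw [if_neg hip, ← hHqf]
        rw [hBmem (i - p) (by omega) q le_rfl]
        omega
  -- minimal walk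
  set k := Nat.find hex with hkdef
  obtain ⟨c, d, hw⟩ : ∃ c d, FWalk E f v w k c d := Nat.find_spec hex
  have hmin : ∀ k' < k, ¬ ∃ c d, FWalk E f v w k' c d := fun k' hk' => Nat.find_min hex hk'
  obtain ⟨hc0, hck, hed, hintf⟩ := hw
  -- cleanness: c i ∈ d j → (j = i ∨ j + 1 = i)
  have clean : ∀ i ≤ k, ∀ j < k, c i ∈ d j → (j = i ∨ j + 1 = i) := by
    intro i hi j hj hm
    by_contra hcon
    push_neg at hcon
    rcases lt_or_ge i j with hlt | hle
    · obtain ⟨k', hk', c', d', hw'⟩ := splice ⟨hc0, hck, hed, hintf⟩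
        (show i + 2 ≤ j + 1 by omega) (show j + 1 ≤ k by omega) hj hm (hed j hj).2.2.2
      exact hmin k' hk' ⟨c', d', hw'⟩
    · obtain ⟨k', hk', c', d', hw'⟩ := splice ⟨hc0, hck, hed, hintf⟩
        (show j + 2 ≤ i by omega) hi hj (hed j hj).2.2.1 hm
      exact hmin k' hk' ⟨c', d', hw'⟩
  -- k ≥ 2
  have hk1 : k ≠ 0 := by
    intro h0
    rw [h0] at hck
    exact hvw (hc0 ▸ hck ▸ rfl)
  have hk2 : 2 ≤ k := by
    by_contra hlt
    have hk : k = 1 := by omega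
    have h1 := hed 0 (by omega)
    have hw' : c 1 = w := by rw [← hk]; exact hck
    have hsub := hlin (d 0) h1.1 f hf h1.2.1
    exact hvw (hsub ⟨hc0 ▸ h1.2.2.1, hvf⟩ ⟨hw' ▸ h1.2.2.2, hwf⟩)
  -- c is injective on [0, k]
  have cinj : ∀ i ≤ k, ∀ j ≤ k, c i = c j → i = j := by
    have key : ∀ i j, i < j → j ≤ k → c i = c j → False := by
      intro i j hij hjk hcc
      have hj1 : c j ∈ d (j - 1) := by
        have := (hed (j - 1) (by omega)).2.2.2
        rwa [show j - 1 + 1 = j by omega] at this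
      have := clean i (by omega) (j - 1) (by omega) (hcc ▸ hj1)
      have hji : j = i + 1 := by omega
      subst hji
      by_cases hjk2 : i + 1 < k
      · have h3 : c i ∈ d (i + 1) := hcc ▸ (hed (i + 1) hjk2).2.2.1
        have := clean i (by omega) (i + 1) hjk2 h3
        omega
      · have h2 : c i ∈ d (i - 1) := by
          have := (hed (i - 1) (by omega)).2.2.2
          rwa [show i - 1 + 1 = i by omega] at this
        have h3 : c (i + 1) ∈ d (i - 1) := hcc ▸ h2
        have := clean (i + 1) (by omega) (i - 1) (by omega) h3
        omega
    intro i hi j hj hcc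
    rcases lt_trichotomy i j with h | h | h
    · exact absurd hcc (fun hc => key i j h hj hc)
    · exact h
    · exact absurd hcc.symm (fun hc => key j i h hi hc)
  -- d is injective on [0, k)
  have dinj : ∀ i < k, ∀ j < k, d i = d j → i = j := by
    have key : ∀ i j, i < j → j < k → d i = d j → False := by
      intro i j hij hjk hdd
      have h1 : c j ∈ d i := hdd ▸ (hed j hjk).2.2.1
      have := clean j (by omega) i (by omega) h1
      have hji : j = i + 1 := by omega
      subst hji
      have h2 : c (i + 1 + 1) ∈ d i := hdd ▸ (hed (i + 1) hjk).2.2.2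
      have := clean (i + 1 + 1) (by omega) i (by omega) h2
      omega
    intro i hi j hj hdd
    rcases lt_trichotomy i j with h | h | h
    · exact absurd hdd (fun hc => key i j h hj hc)
    · exact h
    · exact absurd hdd.symm (fun hc => key j i h hi hc)
  -- membership in f
  have cfmem : ∀ i ≤ k, (c i ∈ f ↔ (i = 0 ∨ i = k)) := by
    intro i hi
    constructor
    · intro hm
      by_contra hcon
      push_neg at hcon
      exact hintf i (by omega) (by omega) hm
    · rintro (rfl | rfl)
      · exact hc0 ▸ hvf
      · exact hck ▸ hwf
  have hbound : ∀ i : Fin (k - 2 + 3), (i : ℕ) ≤ k := by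
    intro i
    have := i.isLt
    omega
  -- build the cycle
  refine ⟨k - 2, fun i => c i, fun i => if (i : ℕ) = 0 then f else d ((i : ℕ) - 1),
    ⟨by omega, ?_, ?_, ?_, ?_⟩, ?_, ?_, ?_⟩
  · -- vinj
    intro i j hij
    exact Fin.ext (cinj i (hbound i) j (hbound j) hij)
  · -- einj
    intro i j hij
    have hik := hbound i
    have hjk := hbound j
    dsimp only at hij
    by_cases hi0 : (i : ℕ) = 0 <;> by_cases hj0 : (j : ℕ) = 0
    · exact Fin.ext (by omega)
    · rw [if_pos hi0, if_neg hj0] at hij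
      exact absurd hij.symm (hed ((j : ℕ) - 1) (by omega)).2.1
    · rw [if_neg hi0, if_pos hj0] at hij
      exact absurd hij (hed ((i : ℕ) - 1) (by omega)).2.1
    · rw [if_neg hi0, if_neg hj0] at hij
      have := dinj ((i : ℕ) - 1) (by omega) ((j : ℕ) - 1) (by omega) hij
      exact Fin.ext (by omega)
  · -- edges mem
    intro i
    have hik := hbound i
    dsimp only
    by_cases hi0 : (i : ℕ) = 0
    · rw [if_pos hi0]
      exact hf
    · rw [if_neg hi0]
      exact (hed ((i : ℕ) - 1) (by omega)).1
  · -- mem_iff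
    intro i j
    have hik := hbound i
    have hjk := hbound j
    dsimp only
    have hmod : ((i : ℕ) + 1) % (k - 2 + 3) = if (i : ℕ) = k then 0 else (i : ℕ) + 1 := by
      by_cases hik2 : (i : ℕ) = k
      · rw [if_pos hik2, hik2, show k + 1 = k - 2 + 3 by omega, Nat.mod_self]
      · rw [if_neg hik2]
        exact Nat.mod_eq_of_lt (by omega)
    by_cases hj0 : (j : ℕ) = 0
    · rw [if_pos hj0, hmod, cfmem (i : ℕ) hik, hj0]
      by_cases hik2 : (i : ℕ) = k
      · rw [if_pos hik2]
        omega
      · rw [if_neg hik2]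
        omega
    · rw [if_neg hj0, hmod]
      constructor
      · intro hm
        have := clean (i : ℕ) hik ((j : ℕ) - 1) (by omega) hm
        by_cases hik2 : (i : ℕ) = k
        · rw [if_pos hik2]
          omega
        · rw [if_neg hik2]
          omega
      · intro hcase
        by_cases hik2 : (i : ℕ) = k
        · rw [if_pos hik2] at hcase
          have hji : (j : ℕ) = k := by omega
          have hmem2 : c k ∈ d (k - 1) := by
            have := (hed (k - 1) (by omega)).2.2.2
            rwa [show k - 1 + 1 = k by omega] at this
          rw [show ((j : ℕ)) - 1 = k - 1 by omega, hik2]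
          exact hmem2
        · rw [if_neg hik2] at hcase
          rcases hcase with hcc | hcc
          · have hmem2 : c (i : ℕ) ∈ d ((i : ℕ) - 1) := by
              have := (hed ((i : ℕ) - 1) (by omega)).2.2.2
              rwa [show (i : ℕ) - 1 + 1 = (i : ℕ) by omega] at this
            rw [show ((j : ℕ)) - 1 = (i : ℕ) - 1 by omega]
            exact hmem2
          · rw [show ((j : ℕ)) - 1 = (i : ℕ) by omega]
            exact (hed (i : ℕ) (by omega)).2.2.1
  · -- es 0 = f
    simp
  · -- vs 0 = v
    simpa using hc0
  · -- vs last = w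
    dsimp only
    rw [show ((Fin.last (k - 2 + 2) : Fin (k - 2 + 3)) : ℕ) = k by simp [Fin.last]; omega]
    exact hck
end

section
/- Let H be a linear hypergraph such that every edge of H is involved in only finitely many β-cycles, and fix a vertex u of H. Then for every edge f of H, the set of vertices v for which there exists a β-path of the form u…vf (starting at u and ending with vertex v followed by edge f) is finite. -/
open Set Function

section Aux11
variable {V : Type*}

structure IsFWalk (E : Set (Set V)) (f : Set V) (a b : V) (k : ℕ)
    (x : ℕ → V) (h : ℕ → Set V) : Prop where
  x0 : x 0 = a
  xk : x k = b
  mem1 : ∀ i, i < k → x i ∈ h i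
  mem2 : ∀ i, i < k → x (i + 1) ∈ h i
  hE : ∀ i, i < k → h i ∈ E
  hne : ∀ i, i < k → h i ≠ f
  notf : ∀ i, 0 < i → i < k → x i ∉ f

lemma splice1 {E : Set (Set V)} {f : Set V} {a b : V} {k : ℕ} {x : ℕ → V} {h : ℕ → Set V}
    (W : IsFWalk E f a b k x h) {i j : ℕ} (hij : i < j) (hjk : j < k) (hm : x i ∈ h j) :
    ∃ x' h', IsFWalk E f a b (k - (j - i)) x' h' := by
  refine ⟨fun t => if t ≤ i then x t else x (t + (j - i)),
          fun t => if t < i then h t else h (t + (j - i)), ?_, ?_, ?_, ?_, ?_, ?_, ?_⟩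
  · rw [if_pos (Nat.zero_le i)]; exact W.x0
  · rw [if_neg (by omega : ¬ (k - (j - i) ≤ i)), (by omega : k - (j - i) + (j - i) = k)]
    exact W.xk
  · intro t ht
    rcases lt_trichotomy t i with h1 | h1 | h1
    · rw [if_pos (le_of_lt h1), if_pos h1]; exact W.mem1 t (by omega)
    · subst h1
      rw [if_pos le_rfl, if_neg (lt_irrefl t), (by omega : t + (j - t) = j)]
      exact hm
    · rw [if_neg (by omega), if_neg (by omega)]
      exact W.mem1 _ (by omega)
  · intro t ht
    by_cases h1 : t < i
    · rw [if_pos (by omega : t + 1 ≤ i), if_pos h1]; exact W.mem2 t (by omega)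
    · rw [if_neg (by omega : ¬ (t + 1 ≤ i)), if_neg h1,
        (by omega : t + 1 + (j - i) = t + (j - i) + 1)]
      exact W.mem2 _ (by omega)
  · intro t ht
    split_ifs
    · exact W.hE t (by omega)
    · exact W.hE _ (by omega)
  · intro t ht
    split_ifs
    · exact W.hne t (by omega)
    · exact W.hne _ (by omega)
  · intro t ht0 htk
    by_cases h1 : t ≤ i
    · rw [if_pos h1]; exact W.notf t ht0 (by omega)
    · rw [if_neg h1]; exact W.notf _ (by omega) (by omega)

lemma splice2 {E : Set (Set V)} {f : Set V} {a b : V} {k : ℕ} {x : ℕ → V} {h : ℕ → Set V}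
    (W : IsFWalk E f a b k x h) {i j : ℕ} (hji : j + 1 < i) (hik : i ≤ k) (hjk : j < k)
    (hm : x i ∈ h j) :
    ∃ x' h', IsFWalk E f a b (k - (i - j - 1)) x' h' := by
  refine ⟨fun t => if t ≤ j then x t else x (t + (i - j - 1)),
          fun t => if t ≤ j then h t else h (t + (i - j - 1)), ?_, ?_, ?_, ?_, ?_, ?_, ?_⟩
  · rw [if_pos (Nat.zero_le j)]; exact W.x0
  · rw [if_neg (by omega : ¬ (k - (i - j - 1) ≤ j)),
      (by omega : k - (i - j - 1) + (i - j - 1) = k)]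
    exact W.xk
  · intro t ht
    by_cases h1 : t ≤ j
    · rw [if_pos h1, if_pos h1]; exact W.mem1 t (by omega)
    · rw [if_neg h1, if_neg h1]; exact W.mem1 _ (by omega)
  · intro t ht
    rcases lt_trichotomy t j with h1 | h1 | h1
    · rw [if_pos (by omega : t + 1 ≤ j), if_pos (le_of_lt h1)]; exact W.mem2 t (by omega)
    · subst h1
      rw [if_neg (by omega : ¬ (t + 1 ≤ t)), if_pos le_rfl,
        (by omega : t + 1 + (i - t - 1) = i)]
      exact hm
    · rw [if_neg (by omega : ¬ (t + 1 ≤ j)), if_neg (by omega : ¬ (t ≤ j)),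
        (by omega : t + 1 + (i - j - 1) = t + (i - j - 1) + 1)]
      exact W.mem2 _ (by omega)
  · intro t ht
    split_ifs
    · exact W.hE t (by omega)
    · exact W.hE _ (by omega)
  · intro t ht
    split_ifs
    · exact W.hne t (by omega)
    · exact W.hne _ (by omega)
  · intro t ht0 htk
    by_cases h1 : t ≤ j
    · rw [if_pos h1]; exact W.notf t ht0 (by omega)
    · rw [if_neg h1]; exact W.notf _ (by omega) (by omega)

lemma walk_tight {E : Set (Set V)} {f : Set V} {a b : V} {k : ℕ} {x : ℕ → V}
    {h : ℕ → Set V} (W : IsFWalk E f a b k x h)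
    (hmin : ∀ k' x' h', IsFWalk E f a b k' x' h' → k ≤ k') :
    ∀ i, i ≤ k → ∀ j, j < k → x i ∈ h j → j = i ∨ j + 1 = i := by
  intro i hi j hj hm
  by_contra hc
  push_neg at hc
  obtain ⟨h1, h2⟩ := hc
  rcases lt_trichotomy i j with hlt | heq | hgt
  · obtain ⟨x', h', W'⟩ := splice1 W hlt hj hm
    have := hmin _ _ _ W'
    omega
  · exact h1 heq.symm
  · have hji : j + 1 < i := by omega
    obtain ⟨x', h', W'⟩ := splice2 W hji hi hj hm
    have := hmin _ _ _ W'
    omega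

lemma walk_vinj {E : Set (Set V)} {f : Set V} {a b : V} {k : ℕ} {x : ℕ → V}
    {h : ℕ → Set V} (W : IsFWalk E f a b k x h)
    (tight : ∀ i, i ≤ k → ∀ j, j < k → x i ∈ h j → j = i ∨ j + 1 = i)
    (hab : a ≠ b) (hbf : b ∈ f) :
    ∀ i, i ≤ k → ∀ j, j ≤ k → x i = x j → i = j := by
  have H : ∀ i j, i < j → j ≤ k → x i ≠ x j := by
    intro i j hij hjk heq
    rcases Nat.lt_or_ge j k with hj | hj
    · have hx : x i ∈ h j := by rw [heq]; exact W.mem1 j hj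
      have := tight i (by omega) j hj hx
      omega
    · have hjk' : j = k := by omega
      subst hjk'
      rcases Nat.eq_zero_or_pos i with h0 | h0
      · apply hab; rw [← W.x0, ← W.xk, ← h0, heq]
      · apply W.notf i h0 (by omega)
        rw [heq, W.xk]; exact hbf
  intro i hi j hj heq
  rcases lt_trichotomy i j with hl | hl | hl
  · exact absurd heq (H i j hl hj)
  · exact hl
  · exact absurd heq.symm (H j i hl hi)

lemma walk_einj {E : Set (Set V)} {f : Set V} {a b : V} {k : ℕ} {x : ℕ → V}
    {h : ℕ → Set V} (W : IsFWalk E f a b k x h)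
    (tight : ∀ i, i ≤ k → ∀ j, j < k → x i ∈ h j → j = i ∨ j + 1 = i) :
    ∀ i, i < k → ∀ j, j < k → h i = h j → i = j := by
  have H : ∀ i j, i < j → j < k → h i ≠ h j := by
    intro i j hij hjk heq
    have hx : x (i + 1) ∈ h j := by rw [← heq]; exact W.mem2 i (by omega)
    have h1 := tight (i + 1) (by omega) j hjk hx
    have hji : j = i + 1 := by omega
    subst hji
    have hx2 : x i ∈ h (i + 1) := by rw [← heq]; exact W.mem1 i (by omega)
    have := tight i (by omega) (i + 1) hjk hx2
    omega
  intro i hi j hj heq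
  rcases lt_trichotomy i j with hl | hl | hl
  · exact absurd heq (H i j hl hj)
  · exact hl
  · exact absurd heq.symm (H j i hl hi)

lemma walk_exists {E : Set (Set V)} {f : Set V} {u v v' : V} {n m : ℕ}
    {A : ℕ → V} {B : ℕ → Set V} {A' : ℕ → V} {B' : ℕ → Set V}
    (hA0 : A 0 = u) (hAn : A n = v) (hBE : ∀ i, i ≤ n → B i ∈ E)
    (hBf : ∀ i, i < n → B i ≠ f)
    (hAB : ∀ i, i ≤ n → ∀ j, j ≤ n → (A i ∈ B j ↔ (j = i ∨ j + 1 = i)))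
    (hAf : ∀ i, i ≤ n → (A i ∈ f ↔ i = n))
    (hA0' : A' 0 = u) (hAn' : A' m = v') (hBE' : ∀ i, i ≤ m → B' i ∈ E)
    (hBf' : ∀ i, i < m → B' i ≠ f)
    (hAB' : ∀ i, i ≤ m → ∀ j, j ≤ m → (A' i ∈ B' j ↔ (j = i ∨ j + 1 = i)))
    (hAf' : ∀ i, i ≤ m → (A' i ∈ f ↔ i = m)) :
    IsFWalk E f v v' (n + m) (fun i => if i ≤ n then A (n - i) else A' (i - n))
      (fun i => if i < n then B (n - 1 - i) else B' (i - n)) := by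
  have hu : A 0 = A' 0 := by rw [hA0, hA0']
  refine ⟨?_, ?_, ?_, ?_, ?_, ?_, ?_⟩
  · rw [if_pos (Nat.zero_le n), Nat.sub_zero]; exact hAn
  · by_cases hm : m = 0
    · subst hm
      rw [if_pos (by omega : n + 0 ≤ n), (by omega : n - (n + 0) = 0), hu]
      exact hAn'
    · rw [if_neg (by omega : ¬ (n + m ≤ n)), (by omega : n + m - n = m)]
      exact hAn'
  · intro i hi
    rcases lt_trichotomy i n with h1 | h1 | h1
    · rw [if_pos (le_of_lt h1), if_pos h1]
      rw [hAB (n - i) (by omega) (n - 1 - i) (by omega)]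
      omega
    · subst h1
      rw [if_pos le_rfl, if_neg (lt_irrefl i), Nat.sub_self, hu]
      rw [hAB' 0 (by omega) 0 (by omega)]
      omega
    · rw [if_neg (by omega), if_neg (by omega)]
      rw [hAB' (i - n) (by omega) (i - n) (by omega)]
      omega
  · intro i hi
    by_cases h1 : i < n
    · rw [if_pos (by omega : i + 1 ≤ n), if_pos h1]
      rw [hAB (n - (i + 1)) (by omega) (n - 1 - i) (by omega)]
      omega
    · rw [if_neg (by omega : ¬ (i + 1 ≤ n)), if_neg h1]
      rw [hAB' (i + 1 - n) (by omega) (i - n) (by omega)]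
      omega
  · intro i hi
    split_ifs
    · exact hBE _ (by omega)
    · exact hBE' _ (by omega)
  · intro i hi
    split_ifs with h1
    · exact hBf _ (by omega)
    · exact hBf' _ (by omega)
  · intro i hi0 hik
    rcases lt_trichotomy i n with h1 | h1 | h1
    · rw [if_pos (le_of_lt h1), hAf (n - i) (by omega)]
      omega
    · subst h1
      rw [if_pos le_rfl, Nat.sub_self, hu, hAf' 0 (by omega)]
      omega
    · rw [if_neg (by omega), hAf' (i - n) (by omega)]
      omega

lemma path_facts {E : Set (Set V)} {n : ℕ} {vs : Fin (n + 1) → V} {es : Fin (n + 1) → Set V}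
    {u v : V} {f : Set V} (hP : IsBetaPath E vs es) (h0 : vs 0 = u)
    (hl : vs (Fin.last n) = v) (he : es (Fin.last n) = f) :
    ∃ (A : ℕ → V) (B : ℕ → Set V),
      A 0 = u ∧ A n = v ∧ (∀ i, i ≤ n → B i ∈ E) ∧ (∀ i, i < n → B i ≠ f) ∧
      (∀ i, i ≤ n → ∀ j, j ≤ n → (A i ∈ B j ↔ (j = i ∨ j + 1 = i))) ∧
      (∀ i, i ≤ n → (A i ∈ f ↔ i = n)) := by
  obtain ⟨hvinj, heinj, hmem, hiff⟩ := hP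
  refine ⟨fun i => vs ⟨min i n, by omega⟩, fun i => es ⟨min i n, by omega⟩,
    ?_, ?_, ?_, ?_, ?_, ?_⟩
  · simpa using h0
  · show vs ⟨min n n, by omega⟩ = v
    rw [← hl]
    exact congrArg vs (Fin.ext (by simp [Fin.last]))
  · intro i _; exact hmem _
  · intro i hi heq
    have h2 : es ⟨min i n, by omega⟩ = es (Fin.last n) := by rw [he]; exact heq
    have h3 := congrArg Fin.val (heinj h2)
    simp [Fin.last] at h3
    omega
  · intro i hi j hj
    have := hiff ⟨min i n, by omega⟩ ⟨min j n, by omega⟩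
    simpa [Nat.min_eq_left hi, Nat.min_eq_left hj] using this
  · intro i hi
    have h2 := hiff ⟨min i n, by omega⟩ (Fin.last n)
    rw [he] at h2
    show vs ⟨min i n, by omega⟩ ∈ f ↔ i = n
    rw [h2]
    simp only [Fin.val_last]
    omega

lemma key_cycle {E : Set (Set V)} (hlin : LinearHG E) {f : Set V} (hfE : f ∈ E)
    {u v v' : V} (hvv : v ≠ v')
    (h1 : ∃ (n : ℕ) (vs : Fin (n + 1) → V) (es : Fin (n + 1) → Set V),
      IsBetaPath E vs es ∧ vs 0 = u ∧ vs (Fin.last n) = v ∧ es (Fin.last n) = f)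
    (h2 : ∃ (m : ℕ) (ws : Fin (m + 1) → V) (gs : Fin (m + 1) → Set V),
      IsBetaPath E ws gs ∧ ws 0 = u ∧ ws (Fin.last m) = v' ∧ gs (Fin.last m) = f) :
    ∃ c ∈ BetaCyclesThroughEdge E f, ∃ i, c.2.1 i = v := by
  classical
  obtain ⟨n, vs, es, hP, h0, hl, he⟩ := h1
  obtain ⟨m, ws, gs, hP', h0', hl', he'⟩ := h2
  obtain ⟨A, B, hA0, hAn, hBE, hBf, hAB, hAf⟩ := path_facts hP h0 hl he
  obtain ⟨A', B', hA0', hAn', hBE', hBf', hAB', hAf'⟩ := path_facts hP' h0' hl' he'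
  have hvf : v ∈ f := by rw [← hAn]; exact (hAf n le_rfl).2 rfl
  have hv'f : v' ∈ f := by rw [← hAn']; exact (hAf' m le_rfl).2 rfl
  have hex : ∃ k, ∃ x h, IsFWalk E f v v' k x h :=
    ⟨n + m, _, _, walk_exists hA0 hAn hBE hBf hAB hAf hA0' hAn' hBE' hBf' hAB' hAf'⟩
  obtain ⟨k₀, ⟨x, h, W⟩, hmin⟩ : ∃ k, (∃ x h, IsFWalk E f v v' k x h) ∧
      ∀ k' x' h', IsFWalk E f v v' k' x' h' → k ≤ k' :=
    ⟨Nat.find hex, Nat.find_spec hex,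
      fun k' x' h' W' => Nat.find_min' hex ⟨x', h', W'⟩⟩
  have tight := walk_tight W hmin
  have vinj := walk_vinj W tight hvv hv'f
  have einj := walk_einj W tight
  have hk1 : k₀ ≠ 0 := by
    intro h0k
    apply hvv
    rw [← W.x0, ← W.xk, h0k]
  have hk2 : k₀ ≠ 1 := by
    intro h1k
    have hsub := hlin (h 0) (W.hE 0 (by omega)) f hfE (W.hne 0 (by omega))
    have hv1 : v ∈ h 0 ∩ f := ⟨by rw [← W.x0]; exact W.mem1 0 (by omega), hvf⟩
    have hv2 : v' ∈ h 0 ∩ f := ⟨by rw [← W.xk, h1k]; exact W.mem2 0 (by omega), hv'f⟩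
    exact hvv (hsub hv1 hv2)
  have hC : IsBetaCycle E (fun i : Fin (k₀ + 1) => x (i : ℕ))
      (fun j : Fin (k₀ + 1) => if (j : ℕ) = 0 then f else h ((j : ℕ) - 1)) := by
    refine ⟨by omega, ?_, ?_, ?_, ?_⟩
    · intro a b hab
      exact Fin.ext (vinj (a : ℕ) (by have := a.isLt; omega) (b : ℕ)
        (by have := b.isLt; omega) hab)
    · intro a b hab
      simp only at hab
      by_cases ha : (a : ℕ) = 0 <;> by_cases hb : (b : ℕ) = 0
      · exact Fin.ext (by omega)
      · rw [if_pos ha, if_neg hb] at hab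
        exact absurd hab.symm (W.hne ((b : ℕ) - 1) (by have := b.isLt; omega))
      · rw [if_neg ha, if_pos hb] at hab
        exact absurd hab (W.hne ((a : ℕ) - 1) (by have := a.isLt; omega))
      · rw [if_neg ha, if_neg hb] at hab
        have := einj ((a : ℕ) - 1) (by have := a.isLt; omega) ((b : ℕ) - 1)
          (by have := b.isLt; omega) hab
        exact Fin.ext (by omega)
    · intro j
      by_cases hj : (j : ℕ) = 0
      · show (if (j : ℕ) = 0 then f else h ((j : ℕ) - 1)) ∈ E
        rw [if_pos hj]; exact hfE
      · show (if (j : ℕ) = 0 then f else h ((j : ℕ) - 1)) ∈ E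
        rw [if_neg hj]; exact W.hE _ (by have := j.isLt; omega)
    · intro i j
      show x (i : ℕ) ∈ (if (j : ℕ) = 0 then f else h ((j : ℕ) - 1)) ↔
        (j : ℕ) = (i : ℕ) ∨ (j : ℕ) = ((i : ℕ) + 1) % (k₀ + 1)
      have hiL : (i : ℕ) ≤ k₀ := by have := i.isLt; omega
      have hjL : (j : ℕ) ≤ k₀ := by have := j.isLt; omega
      have hmod : ((i : ℕ) + 1) % (k₀ + 1) = if (i : ℕ) = k₀ then 0 else (i : ℕ) + 1 := by
        split_ifs with hI
        · rw [hI]; exact Nat.mod_self _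
        · exact Nat.mod_eq_of_lt (by omega)
      by_cases hj : (j : ℕ) = 0
      · rw [if_pos hj]
        constructor
        · intro hxf
          by_contra hc
          push_neg at hc
          rw [hmod] at hc
          have hI0 : 0 < (i : ℕ) := by omega
          have hIk : (i : ℕ) < k₀ := by
            by_contra hik
            have hik' : (i : ℕ) = k₀ := by omega
            rw [if_pos hik'] at hc
            omega
          rw [if_neg (by omega : ¬ ((i : ℕ) = k₀))] at hc
          exact W.notf (i : ℕ) hI0 hIk hxf
        · intro hc
          rw [hmod] at hc
          rcases hc with hc | hc
          · have hi0 : (i : ℕ) = 0 := by omega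
            rw [hi0, W.x0]; exact hvf
          · split_ifs at hc with hI
            · rw [hI, W.xk]; exact hv'f
            · omega
      · rw [if_neg hj]
        constructor
        · intro hx
          have := tight (i : ℕ) hiL ((j : ℕ) - 1) (by omega) hx
          rw [hmod]
          rcases this with hc | hc
          · right
            rw [if_neg (by omega : ¬ ((i : ℕ) = k₀))]
            omega
          · left; omega
        · intro hc
          rw [hmod] at hc
          rcases hc with hc | hc
          · have hieq : (i : ℕ) = ((j : ℕ) - 1) + 1 := by omega
            rw [hieq]
            exact W.mem2 _ (by omega)
          · split_ifs at hc with hI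
            · omega
            · have hieq : (i : ℕ) = (j : ℕ) - 1 := by omega
              rw [hieq]
              exact W.mem1 _ (by omega)
  refine ⟨⟨k₀ + 1, fun i => x (i : ℕ),
      fun j => if (j : ℕ) = 0 then f else h ((j : ℕ) - 1)⟩,
    ⟨hC, 0, ?_⟩, 0, ?_⟩
  · show (if ((0 : Fin (k₀ + 1)) : ℕ) = 0 then f else h (((0 : Fin (k₀ + 1)) : ℕ) - 1)) = f
    simp
  · show x ((0 : Fin (k₀ + 1)) : ℕ) = v
    simpa using W.x0

end Aux11

/-- In a linear hypergraph in which every edge lies on only finitely many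
β-cycles, for every vertex `u` and edge `f` the set of vertices `v` admitting a β-path of
the form `u…vf` is finite. -/
theorem stmt_11 {V : Type*} (E : Set (Set V)) (hlin : LinearHG E)
    (hcyc : ∀ f ∈ E, (BetaCyclesThroughEdge E f).Finite) (u : V) :
    ∀ f ∈ E,
      {v : V | ∃ (n : ℕ) (vs : Fin (n + 1) → V) (es : Fin (n + 1) → Set V),
        IsBetaPath E vs es ∧ vs 0 = u ∧ vs (Fin.last n) = v ∧
          es (Fin.last n) = f}.Finite := by
  intro f hf
  by_cases hne : Set.Nonempty {v : V | ∃ (n : ℕ) (vs : Fin (n + 1) → V)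
      (es : Fin (n + 1) → Set V),
      IsBetaPath E vs es ∧ vs 0 = u ∧ vs (Fin.last n) = v ∧ es (Fin.last n) = f}
  · obtain ⟨v', hv'⟩ := hne
    apply Set.Finite.subset (Set.Finite.insert v'
      ((hcyc f hf).biUnion (fun c _ => Set.finite_range c.2.1)))
    intro v hv
    rcases eq_or_ne v v' with hvv | hvv
    · exact Set.mem_insert_iff.mpr (Or.inl hvv)
    · obtain ⟨c, hc, i, hi⟩ := key_cycle hlin hf hvv hv hv'
      exact Set.mem_insert_iff.mpr (Or.inr (Set.mem_biUnion hc ⟨i, hi⟩))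
  · rw [Set.not_nonempty_iff_eq_empty] at hne
    rw [hne]
    exact Set.finite_empty
end

section
/- Let H = (V, E) be a countable, linear, k-uniform hypergraph such that for every vertex v ∈ V there exist only finitely many β-cycles involving v, and let H* be its dual. If there exists a skeleton G of H* that has a subgraph G' in which every vertex has infinite degree in G', then H has property 𝒫₂. -/
open Set Function

/-- For a countable linear `k`-uniform hypergraph in which every vertex lies
on only finitely many β-cycles: if some skeleton of the dual `H*` has a subgraph all of
whose vertices have infinite degree, then `H` has property 𝒫₂. -/
theorem stmt_14 {V : Type*} [Countable V] (k : ℕ) (hk : 2 ≤ k) (E : Set (Set V))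
    (hunif : Uniform E k) (hlin : LinearHG E)
    (hcyc : ∀ x : V, (BetaCyclesThroughVertex E x).Finite)
    (hskel : ∃ G : SimpleGraph ↥E, IsSkeleton (dualEdges E) G ∧ HasInfDegSubgraph G) :
    PropP2 E := by
  classical
  obtain ⟨G, ⟨T, hT1, hT2, hAdj⟩, G', hne, hdeg⟩ := hskel
  have hshare : ∀ a b : ↥E, G.Adj a b → ∃ v : V, v ∈ (a : Set V) ∧ v ∈ (b : Set V) ∧
      ((a, {e : ↥E | v ∈ (e : Set V)}) ∈ T ∨ (b, {e : ↥E | v ∈ (e : Set V)}) ∈ T) := by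
    intro a b hab
    rcases (hAdj a b).1 hab with ⟨hne', h | h⟩
    · obtain ⟨S, hST, hbS⟩ := h
      obtain ⟨haS, hSd⟩ := hT1 _ hST
      obtain ⟨v, rfl⟩ := hSd
      exact ⟨v, haS, hbS, Or.inl hST⟩
    · obtain ⟨S, hST, haS⟩ := h
      obtain ⟨hbS, hSd⟩ := hT1 _ hST
      obtain ⟨v, rfl⟩ := hSd
      exact ⟨v, haS, hbS, Or.inr hST⟩
  set V' : Set V := {x | {g : ↥E | g ∈ G'.verts ∧ x ∈ (g : Set V)}.Infinite} with hV'
  have L1 : ∀ e ∈ G'.verts, ∃ x ∈ (e : Set V), x ∈ V' := by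
    intro e he
    by_contra h
    push_neg at h
    have hfin : ∀ x ∈ (e : Set V), {g : ↥E | g ∈ G'.verts ∧ x ∈ (g : Set V)}.Finite := by
      intro x hxe
      have := h x hxe
      simp only [hV', Set.mem_setOf_eq] at this
      exact Set.not_infinite.mp this
    have hefin : (e : Set V).Finite := (hunif _ e.2).1
    have hsub : G'.neighborSet e ⊆
        ⋃ x ∈ (e : Set V), {g : ↥E | g ∈ G'.verts ∧ x ∈ (g : Set V)} := by
      intro g hg
      obtain ⟨v, hv1, hv2, _⟩ := hshare e g (G'.adj_sub hg)
      exact Set.mem_biUnion hv1 ⟨G'.edge_vert hg.symm, hv2⟩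
    exact (hdeg e he) ((hefin.biUnion (fun x hxe => hfin x hxe)).subset hsub)
  refine ⟨V', ?_, ?_⟩
  · obtain ⟨e, he⟩ := hne
    obtain ⟨x, _, hxV⟩ := L1 e he
    exact ⟨x, hxV⟩
  · intro x hx
    set xstar : Set ↥E := {e : ↥E | x ∈ (e : Set V)} with hxs
    have hF0 : {g : ↥E | (g, xstar) ∈ T}.Finite := by
      have hmem : xstar ∈ dualEdges E := ⟨x, rfl⟩
      have hfin := hT2 xstar hmem
      have hsub : {g : ↥E | (g, xstar) ∈ T} ⊆ Prod.fst '' {p ∈ T | p.2 = xstar} := by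
        intro g hg
        exact ⟨(g, xstar), ⟨hg, rfl⟩, rfl⟩
      exact ((hfin.image _).subset hsub)
    have hstar : ∀ f : ↥E, f ∈ G'.verts → x ∈ (f : Set V) →
        (V' ∩ (f : Set V)) ⊆ {x} → (f, xstar) ∈ T := by
      intro f hfv hxf hVf
      by_contra hf0
      have hN := hdeg f hfv
      have hsub : G'.neighborSet f ⊆
          (⋃ y ∈ ((f : Set V) \ {x}), {g : ↥E | g ∈ G'.verts ∧ y ∈ (g : Set V)}) ∪
            {g : ↥E | (g, xstar) ∈ T} := by
        intro g hg
        obtain ⟨v, hvf, hvg, hT⟩ := hshare f g (G'.adj_sub hg)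
        by_cases hvx : v = x
        · subst hvx
          rcases hT with h1 | h2
          · exact absurd h1 hf0
          · exact Or.inr h2
        · exact Or.inl (Set.mem_biUnion ⟨hvf, hvx⟩ ⟨G'.edge_vert hg.symm, hvg⟩)
      have hvnotV : ∀ y ∈ (f : Set V) \ {x},
          {g : ↥E | g ∈ G'.verts ∧ y ∈ (g : Set V)}.Finite := by
        intro y hy
        by_contra hinf
        exact hy.2 (hVf ⟨hinf, hy.1⟩)
      have hffin : ((f : Set V) \ {x}).Finite := ((hunif _ f.2).1).subset Set.diff_subset
      exact hN (((hffin.biUnion hvnotV).union hF0).subset hsub)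
    have hB : {g : ↥E | g ∈ G'.verts ∧ x ∈ (g : Set V)}.Infinite := hx
    have hgood : {g : ↥E | g ∈ G'.verts ∧ x ∈ (g : Set V) ∧
        (V' ∩ (g : Set V)).Nontrivial}.Infinite := by
      have hcov : {g : ↥E | g ∈ G'.verts ∧ x ∈ (g : Set V)} ⊆
          {g : ↥E | g ∈ G'.verts ∧ x ∈ (g : Set V) ∧ (V' ∩ (g : Set V)).Nontrivial} ∪
            {g : ↥E | (g, xstar) ∈ T} := by
        rintro g ⟨hg1, hg2⟩
        by_cases hnt : (V' ∩ (g : Set V)).Nontrivial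
        · exact Or.inl ⟨hg1, hg2, hnt⟩
        · have hsub' : (V' ∩ (g : Set V)) ⊆ {x} := by
            intro y hy
            by_contra hyx
            exact hnt ⟨y, hy, x, ⟨hx, hg2⟩, hyx⟩
          exact Or.inr (hstar g hg1 hg2 hsub')
      have h1 := (hB.mono hcov).diff hF0
      refine h1.mono ?_
      rintro g ⟨h | h, h2⟩
      · exact h
      · exact absurd h h2
    have himg : Subtype.val '' {g : ↥E | g ∈ G'.verts ∧ x ∈ (g : Set V) ∧
        (V' ∩ (g : Set V)).Nontrivial} ⊆ {e | e ∈ E ∧ x ∈ e ∧ (V' ∩ e).Nontrivial} := by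
      rintro _ ⟨g, ⟨_, h2, h3⟩, rfl⟩
      exact ⟨g.2, h2, h3⟩
    exact ((hgood.image Subtype.val_injective.injOn).mono himg)
end

section
/- Let H = (V, E) be a countable, linear, k-uniform hypergraph such that for every vertex v ∈ V there exist only finitely many β-cycles involving v. If for every injective edge labeling φ : E → ℕ there exists an infinite increasing path in H, then for every injective vertex labeling ψ : V(H*) → ℕ there exists an infinite increasing β-path in the dual H*. -/
open Set Function

/-- For a countable linear `k`-uniform hypergraph in which every vertex lies
on only finitely many β-cycles: if every injective edge labeling of `H` admits an infinite
increasing path, then every injective vertex labeling of the dual `H*` admits an infinite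
increasing β-path. -/
theorem stmt_17 {V : Type*} [Countable V] (k : ℕ) (hk : 2 ≤ k) (E : Set (Set V))
    (hunif : Uniform E k) (hlin : LinearHG E)
    (hcyc : ∀ x : V, (BetaCyclesThroughVertex E x).Finite)
    (hinc : ∀ φ : ↥E → ℕ, Function.Injective φ →
      ∃ v : ℕ → V, Function.Injective v ∧
        ∃ he : ∀ i, pathEdge k v i ∈ E,
          ∀ i, φ ⟨pathEdge k v i, he i⟩ < φ ⟨pathEdge k v (i + 1), he (i + 1)⟩) :
    ∀ ψ : ↥E → ℕ, Function.Injective ψ →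
      ∃ (v : ℕ → ↥E) (e : ℕ → Set ↥E),
        IsInfBetaPath (dualEdges E) v e ∧ ∀ i, ψ (v i) < ψ (v (i + 1)) := by
  intro ψ hψ
  obtain ⟨v, hv, he, hmono⟩ := hinc ψ hψ
  set w : ℕ → ↥E := fun i => ⟨pathEdge k v i, he i⟩ with hw
  set f : ℕ → Set ↥E := fun j => {e : ↥E | v ((k - 1) * (j + 1)) ∈ (e : Set V)} with hf
  have hk1 : 1 ≤ k - 1 := by omega
  have key : ∀ i j : ℕ, v ((k - 1) * (j + 1)) ∈ pathEdge k v i ↔ (j = i ∨ j + 1 = i) := by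
    intro i j
    constructor
    · rintro ⟨m, hm, hvm⟩
      simp only [Set.mem_Iio] at hm
      have heq : (k - 1) * i + m = (k - 1) * (j + 1) := hv hvm
      have h1 : (k - 1) * i ≤ (k - 1) * (j + 1) := by omega
      have h2 : (k - 1) * (j + 1) ≤ (k - 1) * (i + 1) := by
        have : m ≤ k - 1 := by omega
        calc (k - 1) * (j + 1) = (k - 1) * i + m := heq.symm
          _ ≤ (k - 1) * i + (k - 1) := by omega
          _ = (k - 1) * (i + 1) := by ring
      have h1' : i ≤ j + 1 := Nat.le_of_mul_le_mul_left h1 (by omega)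
      have h2' : j + 1 ≤ i + 1 := Nat.le_of_mul_le_mul_left h2 (by omega)
      omega
    · rintro (rfl | rfl)
      · exact ⟨k - 1, by simp only [Set.mem_Iio]; omega, congrArg v (by ring)⟩
      · exact ⟨0, by simp only [Set.mem_Iio]; omega, congrArg v (by ring)⟩
  have hmem : ∀ i j, w i ∈ f j ↔ (j = i ∨ j + 1 = i) := by
    intro i j
    simpa [hw, hf] using key i j
  have hsm : StrictMono (fun i => ψ (w i)) := strictMono_nat_of_lt_succ hmono
  refine ⟨w, f, ⟨?_, ?_, ?_, hmem⟩, hmono⟩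
  · intro a b h
    exact hsm.injective (by simp [h])
  · intro j j' hjj'
    have h1 : j' = j + 1 ∨ j' + 1 = j + 1 :=
      (hmem (j + 1) j').mp (hjj' ▸ (hmem (j + 1) j).mpr (Or.inr rfl))
    have h2 : j = j' + 1 ∨ j + 1 = j' + 1 :=
      (hmem (j' + 1) j).mp (hjj' ▸ (hmem (j' + 1) j').mpr (Or.inr rfl))
    omega
  · intro j
    exact ⟨v ((k - 1) * (j + 1)), rfl⟩
end
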